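/- arXiv:2411.15487 — 3 statements merged into one kernel-verified Lean document; each statement's English description precedes it below -/
import Mathlib

section
/- Let N ≥ 2 and for j = 1,…,N let real parameters (ω_j, c_j) satisfy |c_j| < 1, 1 − c_j² − ω_j² > 0 and α − β(1−c_j²) > 0, with c₁ < c₂ < … < c_N, and fix shifts x_j ∈ ℝ. Set ω⋆ = (1/256)·min_j (1−c_j²−ω_j²)/(1−c_j²)² and c⋆ = min_{j≠k} |c_j − c_k|. Let ψ̄ : ℝ → ℝ be any C^∞ function with ψ̄(s) = 0 for s ≤ −1, ψ̄(s) = 1 for s ≥ 1, and 0 ≤ ψ̄ ≤ 1. For t > 0 define ψ₁(x,t) = 1, ψ_j(x,t) = ψ̄((x − m_j t)/√t) with m_j = (c_{j−1}+c_j)/2 for j = 2,…,N, and set χ_j = ψ_j − ψ_{j+1} for j = 1,…,N−1 and χ_N = ψ_N. Then there exist C > 0 and T > 0 such that for all t ≥ T, all j ≠ k in {1,…,N} and all m ∈ {1,2,3,4}: ∫_ℝ ( |Φ_k^{(m)}(x − c_k t − x_k)| + |(Φ_k^{(m)})'(x − c_k t − x_k)| )·χ_j(x,t) dx ≤ C·e^{−4·√(ω⋆)·c⋆·t}.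 -/
open MeasureTheory Filter

/-- The explicit soliton profile `φ_{ω,c}`. -/
noncomputable def solitonProfile (α β ω c : ℝ) (ξ : ℝ) : ℝ :=
  Real.sqrt (2 * (1 - c^2 - ω^2) / (α - β * (1 - c^2))) *
    (1 / Real.cosh (Real.sqrt (1 - c^2 - ω^2) * ξ / (1 - c^2)))

/-- First component `Φ⁽¹⁾(x) = e^{iθx} φ_{ω,c}(x)` of the soliton profile quadruple. -/
noncomputable def prof1 (α β ω c : ℝ) (x : ℝ) : ℂ :=
  Complex.exp (Complex.I * (((ω * c / (1 - c^2)) * x : ℝ) : ℂ)) *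
    ((solitonProfile α β ω c x : ℝ) : ℂ)

/-- The soliton profile quadruple `Φ⁽¹⁾, Φ⁽²⁾, Φ⁽³⁾, Φ⁽⁴⁾` (all viewed as ℂ-valued). -/
noncomputable def solProfile (α β ω c : ℝ) (m : Fin 4) (x : ℝ) : ℂ :=
  if m = 0 then prof1 α β ω c x
  else if m = 1 then
    Complex.I * (ω : ℂ) * prof1 α β ω c x + (c : ℂ) * deriv (prof1 α β ω c) x
  else if m = 2 then ((-(solitonProfile α β ω c x)^2 / (1 - c^2) : ℝ) : ℂ)
  else ((c * (solitonProfile α β ω c x)^2 / (1 - c^2) : ℝ) : ℂ)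

/-- The cutoff functions `ψ_j`: `ψ₁ ≡ 1` and `ψ_j(x,t) = ψ̄((x - m_j t)/√t)` for `j ≥ 2`,
where `m_j = (c_{j-1} + c_j)/2` (0-based indexing on `Fin N`). -/
noncomputable def psiCut (N : ℕ) (cs : Fin N → ℝ) (ψb : ℝ → ℝ) (j : Fin N) (x t : ℝ) : ℝ :=
  if (j : ℕ) = 0 then 1
  else ψb ((x - ((cs ⟨(j : ℕ) - 1, lt_of_le_of_lt (Nat.sub_le _ _) j.isLt⟩ + cs j) / 2) * t)
    / Real.sqrt t)

/-- The partition functions `χ_j = ψ_j - ψ_{j+1}` for `j < N-1`, and `χ_N = ψ_N`. -/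
noncomputable def chiCut (N : ℕ) (cs : Fin N → ℝ) (ψb : ℝ → ℝ) (j : Fin N) (x t : ℝ) : ℝ :=
  if h : (j : ℕ) + 1 = N then psiCut N cs ψb j x t
  else psiCut N cs ψb j x t - psiCut N cs ψb ⟨(j : ℕ) + 1, Nat.lt_of_le_of_ne j.isLt h⟩ x t

open Set Topology in
lemma sech_le (y : ℝ) : 1 / Real.cosh y ≤ 2 * Real.exp (-|y|) := by
  have hc := Real.cosh_pos y
  have h1 : Real.exp |y| / 2 ≤ Real.cosh y := by
    rw [Real.cosh_eq]
    rcases abs_cases y with ⟨h, _⟩ | ⟨h, _⟩ <;> rw [h] <;>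
      nlinarith [Real.exp_pos y, Real.exp_pos (-y)]
  have h2 : Real.exp (-|y|) * Real.exp |y| = 1 := by rw [← Real.exp_add]; simp
  rw [div_le_iff₀ hc]
  nlinarith [Real.exp_pos (-|y|), Real.exp_pos |y|]

lemma abs_sinh_le (y : ℝ) : |Real.sinh y| ≤ Real.cosh y := by
  have h := Real.cosh_sq' y
  have hc := Real.cosh_pos y
  rw [abs_le]; constructor <;> nlinarith

open Set Topology in
lemma tail_int {a : ℝ} (ha : 0 < a) (u s : ℝ) :
    IntegrableOn (fun x => Real.exp (-(a * (x - u)))) (Ici s) ∧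
    ∫ x in Ici s, Real.exp (-(a * (x - u))) = Real.exp (-(a * (s - u))) / a := by
  have hfun : ∀ x : ℝ, Real.exp (-(a * (x - u))) = Real.exp (a * u) * Real.exp (-(a * x)) := by
    intro x; rw [← Real.exp_add]; ring_nf
  have hi : IntegrableOn (fun x => Real.exp (-(a * x))) (Ioi s) := by
    simpa [neg_mul] using exp_neg_integrableOn_Ioi s ha
  have hval : ∫ x in Ioi s, Real.exp (-(a * x)) = Real.exp (-(a * s)) / a := by
    have hderiv : ∀ x ∈ Ici s, HasDerivAt (fun x => -Real.exp (-(a * x)) / a)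
        (Real.exp (-(a * x))) x := by
      intro x _
      have h1 : HasDerivAt (fun x : ℝ => -(a * x)) (-a) x := by
        simpa [neg_mul] using (hasDerivAt_id x).const_mul (-a)
      have h2 := h1.exp
      have h3 := (h2.neg).div_const a
      exact h3.congr_deriv (by field_simp)
    have htend : Tendsto (fun x => -Real.exp (-(a * x)) / a) atTop (𝓝 0) := by
      have h4 : Tendsto (fun x : ℝ => -(a * x)) atTop atBot :=
        tendsto_neg_atTop_atBot.comp (tendsto_id.const_mul_atTop ha)
      have h5 := (Real.tendsto_exp_atBot.comp h4).neg.div_const a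
      simpa using h5
    have := integral_Ioi_of_hasDerivAt_of_tendsto' hderiv hi htend
    rw [this]; field_simp; ring
  constructor
  · rw [integrableOn_Ici_iff_integrableOn_Ioi]
    simp_rw [hfun]
    exact hi.const_mul _
  · rw [integral_Ici_eq_integral_Ioi]
    simp_rw [hfun]
    rw [integral_const_mul, hval]
    ring

set_option maxHeartbeats 2000000 in
lemma profile_bound (α β ω c : ℝ) (hc : |c| < 1) (hC1 : 0 < 1 - c^2 - ω^2)
    (hC2 : 0 < α - β * (1 - c^2)) :
    ∃ A, 0 < A ∧ ∀ (m : Fin 4) (x : ℝ),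
      ‖solProfile α β ω c m x‖ + ‖deriv (solProfile α β ω c m) x‖ ≤
        A * Real.exp (-(Real.sqrt (1 - c^2 - ω^2) / (1 - c^2) * |x|)) := by
  have h1c : 0 < 1 - c^2 := by nlinarith [sq_abs c, abs_nonneg c]
  set a : ℝ := Real.sqrt (1 - c^2 - ω^2) / (1 - c^2) with ha_def
  have hsD : 0 < Real.sqrt (1 - c^2 - ω^2) := Real.sqrt_pos.mpr hC1
  have ha : 0 < a := div_pos hsD h1c
  set K : ℝ := Real.sqrt (2 * (1 - c^2 - ω^2) / (α - β * (1 - c^2))) with hK_def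
  have hK : 0 < K := Real.sqrt_pos.mpr (by positivity)
  set θ : ℝ := ω * c / (1 - c^2) with hθ_def
  set φ : ℝ → ℝ := fun x => K / Real.cosh (a * x) with hφ_def
  have hsol : ∀ x, solitonProfile α β ω c x = φ x := by
    intro x
    unfold solitonProfile
    rw [show Real.sqrt (1 - c^2 - ω^2) * x / (1 - c^2) = a * x by rw [ha_def]; ring]
    rw [hφ_def, mul_one_div]
  -- derivatives of φ
  have hcosh : ∀ x : ℝ, HasDerivAt (fun y => Real.cosh (a * y)) (a * Real.sinh (a * x)) x := by
    intro x
    have h := (Real.hasDerivAt_cosh (a * x)).comp x ((hasDerivAt_id x).const_mul a)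
    simp only [Function.comp_def, id_eq, mul_one] at h
    exact h.congr_deriv (by ring)
  have hsinh : ∀ x : ℝ, HasDerivAt (fun y => Real.sinh (a * y)) (a * Real.cosh (a * x)) x := by
    intro x
    have h := (Real.hasDerivAt_sinh (a * x)).comp x ((hasDerivAt_id x).const_mul a)
    simp only [Function.comp_def, id_eq, mul_one] at h
    exact h.congr_deriv (by ring)
  set φ' : ℝ → ℝ := fun x =>
    (0 * Real.cosh (a * x) - K * (a * Real.sinh (a * x))) / (Real.cosh (a * x))^2
    with hφ'_def
  have hdφ : ∀ x, HasDerivAt φ (φ' x) x := fun x =>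
    (hasDerivAt_const x K).div (hcosh x) (Real.cosh_pos (a * x)).ne'
  set φ'' : ℝ → ℝ := fun x =>
    ((0 * (a * Real.sinh (a * x)) - K * (a * (a * Real.cosh (a * x)))) * (Real.cosh (a * x))^2 -
      (0 * Real.cosh (a * x) - K * (a * Real.sinh (a * x))) *
        (2 * Real.cosh (a * x) ^ 1 * (a * Real.sinh (a * x)))) /
      ((Real.cosh (a * x))^2)^2 with hφ''_def
  have hdφ' : ∀ x, HasDerivAt φ' (φ'' x) x := by
    intro x
    have hu : HasDerivAt (fun y => 0 * Real.cosh (a * y) - K * (a * Real.sinh (a * y)))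
        (0 * (a * Real.sinh (a * x)) - K * (a * (a * Real.cosh (a * x)))) x :=
      ((hcosh x).const_mul 0).sub (((hsinh x).const_mul a).const_mul K)
    have hv : HasDerivAt (fun y => (Real.cosh (a * y))^2)
        (2 * Real.cosh (a * x) ^ 1 * (a * Real.sinh (a * x))) x := (hcosh x).pow 2
    exact hu.div hv (pow_ne_zero 2 (Real.cosh_pos (a * x)).ne')
  -- pointwise bounds
  have key : ∀ x : ℝ,
      0 ≤ φ x ∧ φ x ≤ K ∧ φ x ≤ 2 * K * Real.exp (-(a * |x|)) ∧
      |φ' x| ≤ 2 * K * a * Real.exp (-(a * |x|)) ∧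
      |φ'' x| ≤ 6 * K * a^2 * Real.exp (-(a * |x|)) := by
    intro x
    have hchpos : 0 < Real.cosh (a * x) := Real.cosh_pos (a * x)
    have hsh_le : |Real.sinh (a * x)| ≤ Real.cosh (a * x) := abs_sinh_le (a * x)
    have hsh_sq : Real.sinh (a * x) ^ 2 ≤ Real.cosh (a * x) ^ 2 := by
      nlinarith [abs_nonneg (Real.sinh (a * x)), sq_abs (Real.sinh (a * x))]
    have hch1 : 1 ≤ Real.cosh (a * x) := Real.one_le_cosh (a * x)
    have hEpos : 0 < Real.exp (-(a * |x|)) := Real.exp_pos _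
    have hsech : 1 / Real.cosh (a * x) ≤ 2 * Real.exp (-(a * |x|)) := by
      have h := sech_le (a * x)
      rwa [abs_mul, abs_of_pos ha] at h
    have hE1 : 1 ≤ 2 * Real.exp (-(a * |x|)) * Real.cosh (a * x) :=
      (div_le_iff₀ hchpos).mp hsech
    refine ⟨by positivity, ?_, ?_, ?_, ?_⟩
    · rw [hφ_def]
      exact div_le_self hK.le hch1
    · rw [hφ_def]
      simp only
      rw [div_le_iff₀ hchpos]
      nlinarith [mul_le_mul_of_nonneg_left hE1 hK.le]
    · simp only [hφ'_def]
      rw [abs_div, abs_of_pos (by positivity : (0:ℝ) < Real.cosh (a * x)^2),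
        div_le_iff₀ (by positivity : (0:ℝ) < Real.cosh (a * x)^2)]
      have h1eq : |0 * Real.cosh (a * x) - K * (a * Real.sinh (a * x))|
          = K * a * |Real.sinh (a * x)| := by
        rw [show 0 * Real.cosh (a * x) - K * (a * Real.sinh (a * x))
            = -(K * a * Real.sinh (a * x)) by ring, abs_neg, abs_mul, abs_mul,
          abs_of_pos hK, abs_of_pos ha]
      rw [h1eq]
      have p1 : K * a * |Real.sinh (a * x)| ≤ K * a * Real.cosh (a * x) :=
        mul_le_mul_of_nonneg_left hsh_le (by positivity)
      have p2 : K * a * Real.cosh (a * x) * 1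
          ≤ K * a * Real.cosh (a * x) * (2 * Real.exp (-(a * |x|)) * Real.cosh (a * x)) :=
        mul_le_mul_of_nonneg_left hE1 (by positivity)
      nlinarith [p1, p2]
    · simp only [hφ''_def, pow_one]
      rw [abs_div, abs_of_pos (by positivity : (0:ℝ) < (Real.cosh (a * x)^2)^2),
        div_le_iff₀ (by positivity : (0:ℝ) < (Real.cosh (a * x)^2)^2)]
      have q1 : 2 * (K * a^2) * Real.cosh (a * x) * Real.sinh (a * x) ^ 2
          ≤ 2 * (K * a^2) * Real.cosh (a * x) * Real.cosh (a * x) ^ 2 :=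
        mul_le_mul_of_nonneg_left hsh_sq (by positivity)
      have q2 : 3 * K * a^2 * Real.cosh (a * x) ^ 3 * 1
          ≤ 3 * K * a^2 * Real.cosh (a * x) ^ 3
            * (2 * Real.exp (-(a * |x|)) * Real.cosh (a * x)) :=
        mul_le_mul_of_nonneg_left hE1 (by positivity)
      have r0 : (0:ℝ) ≤ K * a^2 * Real.cosh (a * x)^3 := by positivity
      have r1 : (0:ℝ) ≤ 2 * (K * a^2) * Real.cosh (a * x) * Real.sinh (a * x)^2 := by positivity
      rw [abs_le]
      constructor <;> nlinarith [q1, q2, r0, r1]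
  -- complex exponential factor
  have hEnorm : ∀ x : ℝ, ‖Complex.exp (Complex.I * ((θ * x : ℝ) : ℂ))‖ = 1 := by
    intro x
    rw [Complex.norm_exp]
    simp
  have hE : ∀ x : ℝ, HasDerivAt (fun y : ℝ => Complex.exp (Complex.I * ((θ * y : ℝ) : ℂ)))
      (Complex.I * (θ : ℂ) * Complex.exp (Complex.I * ((θ * x : ℝ) : ℂ))) x := by
    intro x
    have h0 : HasDerivAt (fun y : ℝ => θ * y) θ x := by
      simpa using (hasDerivAt_id x).const_mul θ
    have h1 : HasDerivAt (fun y : ℝ => ((θ * y : ℝ) : ℂ)) (θ : ℂ) x := h0.ofReal_comp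
    have h2 := (h1.const_mul Complex.I).cexp
    convert h2 using 1
    ring
  set P1' : ℝ → ℂ := fun x =>
    Complex.I * (θ : ℂ) * Complex.exp (Complex.I * ((θ * x : ℝ) : ℂ)) * ((φ x : ℝ) : ℂ) +
      Complex.exp (Complex.I * ((θ * x : ℝ) : ℂ)) * ((φ' x : ℝ) : ℂ) with hP1'_def
  have hprof1eq : prof1 α β ω c =
      fun x => Complex.exp (Complex.I * ((θ * x : ℝ) : ℂ)) * ((φ x : ℝ) : ℂ) := by
    funext x
    unfold prof1
    rw [hsol x, hθ_def]
  have hP1 : ∀ x, HasDerivAt (prof1 α β ω c) (P1' x) x := by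
    intro x
    rw [hprof1eq]
    exact (hE x).mul ((hdφ x).ofReal_comp)
  have hder1 : deriv (prof1 α β ω c) = P1' := funext fun x => (hP1 x).deriv
  set P1'' : ℝ → ℂ := fun x =>
    (Complex.I * (θ : ℂ) * (Complex.I * (θ : ℂ) * Complex.exp (Complex.I * ((θ * x : ℝ) : ℂ)))
        * ((φ x : ℝ) : ℂ) +
      Complex.I * (θ : ℂ) * Complex.exp (Complex.I * ((θ * x : ℝ) : ℂ)) * ((φ' x : ℝ) : ℂ)) +
    (Complex.I * (θ : ℂ) * Complex.exp (Complex.I * ((θ * x : ℝ) : ℂ)) * ((φ' x : ℝ) : ℂ) +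
      Complex.exp (Complex.I * ((θ * x : ℝ) : ℂ)) * ((φ'' x : ℝ) : ℂ)) with hP1''_def
  have hP1d : ∀ x, HasDerivAt P1' (P1'' x) x := by
    intro x
    have t1 := (((hE x).const_mul (Complex.I * (θ : ℂ))).mul ((hdφ x).ofReal_comp))
    have t2 := (hE x).mul ((hdφ' x).ofReal_comp)
    exact t1.add t2
  -- norm bounds for complex pieces
  have nφ : ∀ x : ℝ, ‖((φ x : ℝ) : ℂ)‖ = φ x := by
    intro x
    rw [Complex.norm_real, Real.norm_eq_abs, abs_of_nonneg (key x).1]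
  have nφ' : ∀ x : ℝ, ‖((φ' x : ℝ) : ℂ)‖ = |φ' x| := by
    intro x; rw [Complex.norm_real, Real.norm_eq_abs]
  have nφ'' : ∀ x : ℝ, ‖((φ'' x : ℝ) : ℂ)‖ = |φ'' x| := by
    intro x; rw [Complex.norm_real, Real.norm_eq_abs]
  have nprof1 : ∀ x : ℝ, ‖prof1 α β ω c x‖ ≤ 2 * K * Real.exp (-(a * |x|)) := by
    intro x
    rw [hprof1eq]
    simp only [norm_mul, hEnorm x, nφ x, one_mul]
    exact (key x).2.2.1
  have nP1' : ∀ x : ℝ, ‖P1' x‖ ≤ (2 * K * |θ| + 2 * K * a) * Real.exp (-(a * |x|)) := by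
    intro x
    obtain ⟨k0, k1, k2, k3, k4⟩ := key x
    have h := norm_add_le
      (Complex.I * (θ : ℂ) * Complex.exp (Complex.I * ((θ * x : ℝ) : ℂ)) * ((φ x : ℝ) : ℂ))
      (Complex.exp (Complex.I * ((θ * x : ℝ) : ℂ)) * ((φ' x : ℝ) : ℂ))
    rw [hP1'_def]
    simp only [norm_mul, hEnorm x, nφ x, nφ' x, Complex.norm_I, one_mul, mul_one,
      Complex.norm_real, Real.norm_eq_abs] at h ⊢
    have b1 : |θ| * φ x ≤ |θ| * (2 * K * Real.exp (-(a * |x|))) :=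
      mul_le_mul_of_nonneg_left k2 (abs_nonneg θ)
    nlinarith [h, b1, k3]
  have nP1'' : ∀ x : ℝ,
      ‖P1'' x‖ ≤ (2 * K * θ^2 + 4 * K * |θ| * a + 6 * K * a^2) * Real.exp (-(a * |x|)) := by
    intro x
    obtain ⟨k0, k1, k2, k3, k4⟩ := key x
    rw [hP1''_def]
    have h := norm_add_le (E := ℂ)
      (Complex.I * (θ : ℂ) * (Complex.I * (θ : ℂ) * Complex.exp (Complex.I * ((θ * x : ℝ) : ℂ)))
          * ((φ x : ℝ) : ℂ) +
        Complex.I * (θ : ℂ) * Complex.exp (Complex.I * ((θ * x : ℝ) : ℂ)) * ((φ' x : ℝ) : ℂ))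
      (Complex.I * (θ : ℂ) * Complex.exp (Complex.I * ((θ * x : ℝ) : ℂ)) * ((φ' x : ℝ) : ℂ) +
        Complex.exp (Complex.I * ((θ * x : ℝ) : ℂ)) * ((φ'' x : ℝ) : ℂ))
    have h1 := norm_add_le
      (Complex.I * (θ : ℂ) * (Complex.I * (θ : ℂ) * Complex.exp (Complex.I * ((θ * x : ℝ) : ℂ)))
          * ((φ x : ℝ) : ℂ))
      (Complex.I * (θ : ℂ) * Complex.exp (Complex.I * ((θ * x : ℝ) : ℂ)) * ((φ' x : ℝ) : ℂ))
    have h2 := norm_add_le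
      (Complex.I * (θ : ℂ) * Complex.exp (Complex.I * ((θ * x : ℝ) : ℂ)) * ((φ' x : ℝ) : ℂ))
      (Complex.exp (Complex.I * ((θ * x : ℝ) : ℂ)) * ((φ'' x : ℝ) : ℂ))
    simp only [norm_mul, hEnorm x, nφ x, nφ' x, nφ'' x, Complex.norm_I, one_mul, mul_one,
      Complex.norm_real, Real.norm_eq_abs] at h h1 h2 ⊢
    have b1 : |θ| * (|θ| * φ x) ≤ |θ| * (|θ| * (2 * K * Real.exp (-(a * |x|)))) :=
      mul_le_mul_of_nonneg_left (mul_le_mul_of_nonneg_left k2 (abs_nonneg θ)) (abs_nonneg θ)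
    have b2 : |θ| * |φ' x| ≤ |θ| * (2 * K * a * Real.exp (-(a * |x|))) :=
      mul_le_mul_of_nonneg_left k3 (abs_nonneg θ)
    nlinarith [h, h1, h2, b1, b2, k4, sq_abs θ]
  -- case equations
  have e0 : solProfile α β ω c 0 = prof1 α β ω c := by
    funext y; simp [solProfile]
  have e1 : solProfile α β ω c 1 = fun y =>
      Complex.I * (ω : ℂ) * prof1 α β ω c y + (c : ℂ) * P1' y := by
    funext y; simp [solProfile, hder1]
  have e2 : solProfile α β ω c 2 = fun y => ((-(φ y)^2 / (1 - c^2) : ℝ) : ℂ) := by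
    funext y; simp [solProfile, hsol]
  have e3 : solProfile α β ω c 3 = fun y => ((c * (φ y)^2 / (1 - c^2) : ℝ) : ℂ) := by
    funext y; simp [solProfile, hsol]
  have hd1 : ∀ x, HasDerivAt (fun y => Complex.I * (ω : ℂ) * prof1 α β ω c y + (c : ℂ) * P1' y)
      (Complex.I * (ω : ℂ) * P1' x + (c : ℂ) * P1'' x) x := fun x =>
    ((hP1 x).const_mul (Complex.I * (ω : ℂ))).add ((hP1d x).const_mul (c : ℂ))
  have hg2 : ∀ x, HasDerivAt (fun y => -(φ y)^2 / (1 - c^2)) (-(2 * φ x ^ 1 * φ' x) / (1 - c^2)) x :=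
    fun x => ((hdφ x).pow 2).neg.div_const _
  have hg3 : ∀ x, HasDerivAt (fun y => c * (φ y)^2 / (1 - c^2)) (c * (2 * φ x ^ 1 * φ' x) / (1 - c^2)) x :=
    fun x => (((hdφ x).pow 2).const_mul c).div_const _
  -- constants
  set A0 : ℝ := 2 * K + (2 * K * |θ| + 2 * K * a) with hA0_def
  set A1 : ℝ := |ω| * (2 * K) + |c| * (2 * K * |θ| + 2 * K * a) + |ω| * (2 * K * |θ| + 2 * K * a)
    + |c| * (2 * K * θ^2 + 4 * K * |θ| * a + 6 * K * a^2) with hA1_def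
  set A2 : ℝ := (2 * K^2 + 4 * K^2 * a) / (1 - c^2) with hA2_def
  set A3 : ℝ := (|c| * (2 * K^2) + |c| * (4 * K^2 * a)) / (1 - c^2) with hA3_def
  have hA0pos : 0 < A0 := by rw [hA0_def]; positivity
  have hA1nn : 0 ≤ A1 := by rw [hA1_def]; positivity
  have hA2nn : 0 ≤ A2 := by rw [hA2_def]; exact div_nonneg (by positivity) h1c.le
  have hA3nn : 0 ≤ A3 := by rw [hA3_def]; exact div_nonneg (by positivity) h1c.le
  refine ⟨A0 + A1 + A2 + A3 + 1, by linarith, ?_⟩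
  intro m x
  have hQpos : (0:ℝ) < Real.exp (-(a * |x|)) := Real.exp_pos _
  obtain ⟨k0, k1, k2, k3, k4⟩ := key x
  have hAle : ∀ B : ℝ, B ≤ A0 + A1 + A2 + A3 + 1 →
      B * Real.exp (-(a * |x|)) ≤ (A0 + A1 + A2 + A3 + 1) * Real.exp (-(a * |x|)) :=
    fun B hB => mul_le_mul_of_nonneg_right hB hQpos.le
  obtain ⟨i, hi⟩ := m
  interval_cases i
  · -- m = 0
    have hm : (⟨0, hi⟩ : Fin 4) = 0 := rfl
    rw [hm, e0, hder1]
    refine le_trans (add_le_add (nprof1 x) (nP1' x)) ?_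
    refine le_trans (le_of_eq (by rw [hA0_def]; ring)) (hAle A0 (by linarith))
  · -- m = 1
    have hm : (⟨1, hi⟩ : Fin 4) = 1 := rfl
    rw [hm]
    simp only [e1]
    rw [(hd1 x).deriv]
    have v1 : ‖Complex.I * (ω : ℂ) * prof1 α β ω c x + (c : ℂ) * P1' x‖
        ≤ |ω| * ‖prof1 α β ω c x‖ + |c| * ‖P1' x‖ := by
      refine le_trans (norm_add_le _ _) (le_of_eq ?_)
      simp [norm_mul, Complex.norm_real, Real.norm_eq_abs]
    have v2 : ‖Complex.I * (ω : ℂ) * P1' x + (c : ℂ) * P1'' x‖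
        ≤ |ω| * ‖P1' x‖ + |c| * ‖P1'' x‖ := by
      refine le_trans (norm_add_le _ _) (le_of_eq ?_)
      simp [norm_mul, Complex.norm_real, Real.norm_eq_abs]
    refine le_trans (add_le_add v1 v2) ?_
    have b1 := mul_le_mul_of_nonneg_left (nprof1 x) (abs_nonneg ω)
    have b2 := mul_le_mul_of_nonneg_left (nP1' x) (abs_nonneg c)
    have b3 := mul_le_mul_of_nonneg_left (nP1' x) (abs_nonneg ω)
    have b4 := mul_le_mul_of_nonneg_left (nP1'' x) (abs_nonneg c)
    have hsum : |ω| * (2 * K * Real.exp (-(a * |x|)))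
        + |c| * ((2 * K * |θ| + 2 * K * a) * Real.exp (-(a * |x|)))
        + |ω| * ((2 * K * |θ| + 2 * K * a) * Real.exp (-(a * |x|)))
        + |c| * ((2 * K * θ^2 + 4 * K * |θ| * a + 6 * K * a^2) * Real.exp (-(a * |x|)))
        = A1 * Real.exp (-(a * |x|)) := by rw [hA1_def]; ring
    refine le_trans (by linarith [b1, b2, b3, b4]) (le_trans (le_of_eq hsum)
      (hAle A1 (by linarith)))
  · -- m = 2
    have hm : (⟨2, hi⟩ : Fin 4) = 2 := rfl
    rw [hm]
    simp only [e2]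
    rw [((hg2 x).ofReal_comp).deriv]
    rw [Complex.norm_real, Complex.norm_real, Real.norm_eq_abs, Real.norm_eq_abs]
    have w1 : |(-(φ x)^2 / (1 - c^2))| = (φ x)^2 / (1 - c^2) := by
      rw [abs_div, abs_of_pos h1c, abs_neg, abs_of_nonneg (sq_nonneg _)]
    have w2 : |(-(2 * φ x ^ 1 * φ' x) / (1 - c^2))| = 2 * φ x * |φ' x| / (1 - c^2) := by
      rw [abs_div, abs_of_pos h1c, abs_neg, pow_one, abs_mul, abs_mul, abs_of_nonneg k0]
      norm_num
    rw [w1, w2]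
    have u1 : (φ x)^2 ≤ K * (2 * K * Real.exp (-(a * |x|))) := by nlinarith
    have u2 : 2 * φ x * |φ' x| ≤ 2 * (K * (2 * K * a * Real.exp (-(a * |x|)))) := by
      nlinarith [abs_nonneg (φ' x), mul_le_mul k1 k3 (abs_nonneg (φ' x)) hK.le]
    have hcomb : (φ x)^2 / (1 - c^2) + 2 * φ x * |φ' x| / (1 - c^2)
        ≤ A2 * Real.exp (-(a * |x|)) := by
      rw [← add_div, hA2_def, div_mul_eq_mul_div, div_le_div_iff_of_pos_right h1c]
      linarith
    exact le_trans hcomb (hAle A2 (by linarith))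
  · -- m = 3
    have hm : (⟨3, hi⟩ : Fin 4) = 3 := rfl
    rw [hm]
    simp only [e3]
    rw [((hg3 x).ofReal_comp).deriv]
    rw [Complex.norm_real, Complex.norm_real, Real.norm_eq_abs, Real.norm_eq_abs]
    have w1 : |(c * (φ x)^2 / (1 - c^2))| = |c| * (φ x)^2 / (1 - c^2) := by
      rw [abs_div, abs_of_pos h1c, abs_mul, abs_of_nonneg (sq_nonneg (φ x))]
    have w2 : |(c * (2 * φ x ^ 1 * φ' x) / (1 - c^2))| = |c| * (2 * φ x * |φ' x|) / (1 - c^2) := by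
      rw [abs_div, abs_of_pos h1c, pow_one, abs_mul, abs_mul, abs_mul, abs_of_nonneg k0]
      norm_num
    rw [w1, w2]
    have u1 : (φ x)^2 ≤ K * (2 * K * Real.exp (-(a * |x|))) := by nlinarith
    have u2 : 2 * φ x * |φ' x| ≤ 2 * (K * (2 * K * a * Real.exp (-(a * |x|)))) := by
      nlinarith [abs_nonneg (φ' x), mul_le_mul k1 k3 (abs_nonneg (φ' x)) hK.le]
    have u1' := mul_le_mul_of_nonneg_left u1 (abs_nonneg c)
    have u2' := mul_le_mul_of_nonneg_left u2 (abs_nonneg c)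
    have hcomb : |c| * (φ x)^2 / (1 - c^2) + |c| * (2 * φ x * |φ' x|) / (1 - c^2)
        ≤ A3 * Real.exp (-(a * |x|)) := by
      rw [← add_div, hA3_def, div_mul_eq_mul_div, div_le_div_iff_of_pos_right h1c]
      nlinarith [u1', u2']
    exact le_trans hcomb (hAle A3 (by linarith))

open Set Topology in
lemma halfline_bound {A r u s : ℝ} (hA : 0 < A) (hr : 0 < r) (F χ : ℝ → ℝ)
    (hF0 : ∀ ξ, 0 ≤ F ξ) (hFb : ∀ ξ, F ξ ≤ A * Real.exp (-(r * |ξ|)))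
    (hχ : ∀ x, |χ x| ≤ 2) (hvan : ∀ x, x ≤ s → χ x = 0) :
    ∫ x, F (x - u) * χ x ≤ 2 * A / r * Real.exp (-(r * (s - u))) := by
  set H : ℝ → ℝ := (Set.Ici s).indicator (fun x => 2 * A * Real.exp (-(r * (x - u)))) with hH
  have hHint : Integrable H := by
    rw [hH]
    exact MeasureTheory.IntegrableOn.integrable_indicator
      (((tail_int hr u s).1).const_mul (2 * A)) measurableSet_Ici
  have hb : ∀ x, ‖F (x - u) * χ x‖ ≤ H x := by
    intro x
    by_cases hx : s ≤ x
    · rw [hH, Set.indicator_of_mem (show x ∈ Ici s from hx)]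
      rw [Real.norm_eq_abs, abs_mul, abs_of_nonneg (hF0 _)]
      have h2 : F (x - u) ≤ A * Real.exp (-(r * (x - u))) := by
        refine le_trans (hFb _) (mul_le_mul_of_nonneg_left (Real.exp_le_exp.mpr ?_) hA.le)
        have := le_abs_self (x - u)
        nlinarith
      nlinarith [hχ x, hF0 (x - u), abs_nonneg (χ x), Real.exp_pos (-(r * (x - u))),
        mul_le_mul_of_nonneg_left (hχ x) (hF0 (x - u)),
        mul_le_mul_of_nonneg_right h2 (by norm_num : (0:ℝ) ≤ 2)]
    · push_neg at hx
      rw [hvan x hx.le, mul_zero, norm_zero, hH, Set.indicator_of_notMem (by simpa using hx)]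
  calc ∫ x, F (x - u) * χ x ≤ ‖∫ x, F (x - u) * χ x‖ := le_abs_self _
    _ ≤ ∫ x, ‖F (x - u) * χ x‖ := norm_integral_le_integral_norm _
    _ ≤ ∫ x, H x := integral_mono_of_nonneg (Filter.Eventually.of_forall fun x => norm_nonneg _)
        hHint (Filter.Eventually.of_forall hb)
    _ = 2 * A / r * Real.exp (-(r * (s - u))) := by
        rw [hH, integral_indicator measurableSet_Ici, MeasureTheory.integral_const_mul,
          (tail_int hr u s).2]
        ring

open Set Topology in
lemma halfline_bound' {A r u s : ℝ} (hA : 0 < A) (hr : 0 < r) (F χ : ℝ → ℝ)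
    (hF0 : ∀ ξ, 0 ≤ F ξ) (hFb : ∀ ξ, F ξ ≤ A * Real.exp (-(r * |ξ|)))
    (hχ : ∀ x, |χ x| ≤ 2) (hvan : ∀ x, s ≤ x → χ x = 0) :
    ∫ x, F (x - u) * χ x ≤ 2 * A / r * Real.exp (-(r * (u - s))) := by
  have h := halfline_bound (u := -u) (s := -s) hA hr (fun ξ => F (-ξ)) (fun x => χ (-x))
    (fun ξ => hF0 (-ξ)) (fun ξ => by simpa [abs_neg] using hFb (-ξ))
    (fun x => hχ (-x)) (fun x hx => hvan (-x) (by linarith))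
  have heq : ∫ x, F (x - u) * χ x = ∫ x, F (-(x - -u)) * χ (-x) := by
    rw [← MeasureTheory.integral_neg_eq_self (fun x => F (x - u) * χ x) volume]
    congr 1
    funext x
    have he : -x - u = -(x - -u) := by ring
    rw [he]
  rw [heq]
  refine le_trans h (le_of_eq ?_)
  ring_nf

lemma psiCut_mem {N : ℕ} {cs : Fin N → ℝ} {ψb : ℝ → ℝ}
    (hψbb : ∀ s : ℝ, 0 ≤ ψb s ∧ ψb s ≤ 1) (j : Fin N) (x t : ℝ) :
    0 ≤ psiCut N cs ψb j x t ∧ psiCut N cs ψb j x t ≤ 1 := by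
  unfold psiCut
  split
  · norm_num
  · exact hψbb _

lemma chiCut_abs_le {N : ℕ} {cs : Fin N → ℝ} {ψb : ℝ → ℝ}
    (hψbb : ∀ s : ℝ, 0 ≤ ψb s ∧ ψb s ≤ 1) (j : Fin N) (x t : ℝ) :
    |chiCut N cs ψb j x t| ≤ 2 := by
  unfold chiCut
  split
  · obtain ⟨h0, h1⟩ := psiCut_mem hψbb j x t
    rw [abs_le]; constructor <;> linarith
  · obtain ⟨h0, h1⟩ := psiCut_mem hψbb j x t
    obtain ⟨h2, h3⟩ := psiCut_mem hψbb (cs := cs) ⟨(j : ℕ) + 1, by omega⟩ x t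
    rw [abs_le]
    constructor <;> [linarith [h0, h3]; linarith [h1, h2]]

lemma psiCut_zero {N : ℕ} {cs : Fin N → ℝ} {ψb : ℝ → ℝ}
    (hψb0 : ∀ s : ℝ, s ≤ -1 → ψb s = 0) (j jp : Fin N) (hjp : (jp : ℕ) = (j : ℕ) - 1)
    (hj : (j : ℕ) ≠ 0) {x t : ℝ} (ht : 0 < t)
    (hx : x ≤ ((cs jp + cs j) / 2) * t - Real.sqrt t) :
    psiCut N cs ψb j x t = 0 := by
  unfold psiCut
  rw [if_neg hj]
  apply hψb0
  have he : (⟨(j : ℕ) - 1, lt_of_le_of_lt (Nat.sub_le _ _) j.isLt⟩ : Fin N) = jp :=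
    Fin.ext (by simp only [Fin.val_mk]; omega)
  rw [he, div_le_iff₀ (Real.sqrt_pos.mpr ht)]
  nlinarith [Real.sqrt_pos.mpr ht]

lemma psiCut_one {N : ℕ} {cs : Fin N → ℝ} {ψb : ℝ → ℝ}
    (hψb1 : ∀ s : ℝ, 1 ≤ s → ψb s = 1) (j jp : Fin N) (hjp : (jp : ℕ) = (j : ℕ) - 1)
    {x t : ℝ} (ht : 0 < t)
    (hx : ((cs jp + cs j) / 2) * t + Real.sqrt t ≤ x) :
    psiCut N cs ψb j x t = 1 := by
  unfold psiCut
  split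
  · rfl
  · apply hψb1
    have he : (⟨(j : ℕ) - 1, lt_of_le_of_lt (Nat.sub_le _ _) j.isLt⟩ : Fin N) = jp :=
      Fin.ext (by simp only [Fin.val_mk]; omega)
    rw [he, le_div_iff₀ (Real.sqrt_pos.mpr ht)]
    nlinarith [Real.sqrt_pos.mpr ht]

lemma chiCut_zero_left {N : ℕ} {cs : Fin N → ℝ} {ψb : ℝ → ℝ}
    (hψb0 : ∀ s : ℝ, s ≤ -1 → ψb s = 0) (hmono : StrictMono cs)
    (j jp : Fin N) (hjp : (jp : ℕ) = (j : ℕ) - 1) (hj : (j : ℕ) ≠ 0)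
    {x t : ℝ} (ht : 0 < t)
    (hx : x ≤ ((cs jp + cs j) / 2) * t - Real.sqrt t) :
    chiCut N cs ψb j x t = 0 := by
  unfold chiCut
  split
  · exact psiCut_zero hψb0 j jp hjp hj ht hx
  · rename_i hne
    have h1 := psiCut_zero hψb0 j jp hjp hj ht hx
    have hjlt : (j : ℕ) + 1 < N := Nat.lt_of_le_of_ne j.isLt hne
    have h2 : psiCut N cs ψb ⟨(j : ℕ) + 1, hjlt⟩ x t = 0 := by
      apply psiCut_zero hψb0 _ j (by simp) (by simp) ht
      have hm1 : cs jp ≤ cs j := hmono.monotone (by rw [Fin.le_def]; first | omega | (simp only [Fin.val_mk]; omega))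
      have hm2 : cs j ≤ cs ⟨(j : ℕ) + 1, hjlt⟩ := hmono.monotone (by rw [Fin.le_def]; simp)
      have := mul_le_mul_of_nonneg_right
        (by linarith : (cs jp + cs j) / 2 ≤ (cs j + cs ⟨(j : ℕ) + 1, hjlt⟩) / 2) ht.le
      linarith
    rw [h1, h2, sub_zero]

lemma chiCut_zero_right {N : ℕ} {cs : Fin N → ℝ} {ψb : ℝ → ℝ}
    (hψb1 : ∀ s : ℝ, 1 ≤ s → ψb s = 1) (hmono : StrictMono cs)
    (j j1 : Fin N) (hj1 : (j1 : ℕ) = (j : ℕ) + 1)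
    {x t : ℝ} (ht : 0 < t)
    (hx : ((cs j + cs j1) / 2) * t + Real.sqrt t ≤ x) :
    chiCut N cs ψb j x t = 0 := by
  unfold chiCut
  split
  · rename_i h
    exact absurd h (by have := j1.isLt; omega)
  · rename_i hne
    have hjlt : (j : ℕ) + 1 < N := Nat.lt_of_le_of_ne j.isLt hne
    have he : (⟨(j : ℕ) + 1, hjlt⟩ : Fin N) = j1 := Fin.ext (by simp only [Fin.val_mk]; omega)
    have h1 : psiCut N cs ψb ⟨(j : ℕ) + 1, hjlt⟩ x t = 1 := by
      apply psiCut_one hψb1 _ j (by simp) ht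
      rw [he]
      exact hx
    have h2 : psiCut N cs ψb j x t = 1 := by
      by_cases hj0 : (j : ℕ) = 0
      · unfold psiCut; rw [if_pos hj0]
      · apply psiCut_one hψb1 j ⟨(j : ℕ) - 1, lt_of_le_of_lt (Nat.sub_le _ _) j.isLt⟩ rfl ht
        have hm1 : cs ⟨(j : ℕ) - 1, lt_of_le_of_lt (Nat.sub_le _ _) j.isLt⟩ ≤ cs j :=
          hmono.monotone (by rw [Fin.le_def]; first | omega | (simp only [Fin.val_mk]; omega))
        have hm2 : cs j ≤ cs j1 := hmono.monotone (by rw [Fin.le_def]; first | omega | (simp only [Fin.val_mk]; omega))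
        have := mul_le_mul_of_nonneg_right
          (by linarith : (cs ⟨(j : ℕ) - 1, lt_of_le_of_lt (Nat.sub_le _ _) j.isLt⟩ + cs j) / 2
            ≤ (cs j + cs j1) / 2) ht.le
        linarith
    rw [h1, h2, sub_self]

set_option maxHeartbeats 1000000 in
theorem stmt16 (α β : ℝ) (hβ : β ≠ 0) (N : ℕ) (hN : 2 ≤ N)
    (ωs cs xs : Fin N → ℝ)
    (hc : ∀ j, |cs j| < 1)
    (hC1 : ∀ j, 0 < 1 - (cs j)^2 - (ωs j)^2)
    (hC2 : ∀ j, 0 < α - β * (1 - (cs j)^2))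
    (hmono : StrictMono cs)
    (ωstar cstar : ℝ)
    (hωstar : ωstar = (1 / 256) * ⨅ j : Fin N, (1 - (cs j)^2 - (ωs j)^2) / (1 - (cs j)^2)^2)
    (hcstar : cstar = ⨅ p : {p : Fin N × Fin N // p.1 ≠ p.2}, |cs p.val.1 - cs p.val.2|)
    (ψb : ℝ → ℝ) (hψb : ContDiff ℝ (⊤ : ℕ∞) ψb)
    (hψb0 : ∀ s : ℝ, s ≤ -1 → ψb s = 0)
    (hψb1 : ∀ s : ℝ, 1 ≤ s → ψb s = 1)
    (hψbb : ∀ s : ℝ, 0 ≤ ψb s ∧ ψb s ≤ 1) :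
    ∃ C T : ℝ, 0 < C ∧ 0 < T ∧
      ∀ t : ℝ, T ≤ t → ∀ j k : Fin N, j ≠ k → ∀ m : Fin 4,
        (∫ x : ℝ,
          (‖solProfile α β (ωs k) (cs k) m (x - cs k * t - xs k)‖
            + ‖deriv (solProfile α β (ωs k) (cs k) m) (x - cs k * t - xs k)‖)
          * chiCut N cs ψb j x t)
        ≤ C * Real.exp (-4 * Real.sqrt ωstar * cstar * t) := by
  classical
  have hNe : Nonempty (Fin N) := ⟨⟨0, by omega⟩⟩
  have h1c : ∀ i : Fin N, 0 < 1 - (cs i)^2 := fun i => by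
    nlinarith [sq_abs (cs i), abs_nonneg (cs i), hc i]
  set r : Fin N → ℝ := fun i => Real.sqrt (1 - (cs i)^2 - (ωs i)^2) / (1 - (cs i)^2) with hr_def
  have hrpos : ∀ i, 0 < r i := fun i => div_pos (Real.sqrt_pos.mpr (hC1 i)) (h1c i)
  -- ωstar facts
  have hiInf_pos : 0 < ⨅ i : Fin N, (1 - (cs i)^2 - (ωs i)^2) / (1 - (cs i)^2)^2 := by
    obtain ⟨i, hi⟩ := exists_eq_ciInf_of_finite
      (f := fun i : Fin N => (1 - (cs i)^2 - (ωs i)^2) / (1 - (cs i)^2)^2)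
    rw [← hi]
    exact div_pos (hC1 i) (pow_pos (h1c i) 2)
  have hωpos : 0 < ωstar := by
    rw [hωstar]
    nlinarith [hiInf_pos]
  have hsqω : 0 < Real.sqrt ωstar := Real.sqrt_pos.mpr hωpos
  have hrate : ∀ i : Fin N, 16 * Real.sqrt ωstar ≤ r i := by
    intro i
    have h1 : (⨅ i : Fin N, (1 - (cs i)^2 - (ωs i)^2) / (1 - (cs i)^2)^2)
        ≤ (1 - (cs i)^2 - (ωs i)^2) / (1 - (cs i)^2)^2 :=
      ciInf_le (Set.Finite.bddBelow (Set.finite_range _)) i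
    have h2 : 256 * ωstar ≤ (1 - (cs i)^2 - (ωs i)^2) / (1 - (cs i)^2)^2 := by
      rw [hωstar]; linarith
    have h3 : r i = Real.sqrt ((1 - (cs i)^2 - (ωs i)^2) / (1 - (cs i)^2)^2) := by
      rw [hr_def]
      simp only
      rw [Real.sqrt_div (hC1 i).le, Real.sqrt_sq (h1c i).le]
    rw [h3]
    calc 16 * Real.sqrt ωstar = Real.sqrt (256 * ωstar) := by
          rw [show (256:ℝ) * ωstar = 16^2 * ωstar by ring,
            Real.sqrt_mul (by positivity) ωstar, Real.sqrt_sq (by norm_num : (0:ℝ) ≤ 16)]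
      _ ≤ _ := Real.sqrt_le_sqrt h2
  -- cstar facts
  haveI hNe2 : Nonempty {p : Fin N × Fin N // p.1 ≠ p.2} :=
    ⟨⟨(⟨0, by omega⟩, ⟨1, by omega⟩), by simp [Fin.ext_iff]⟩⟩
  have hcs_pos : 0 < cstar := by
    rw [hcstar]
    obtain ⟨p, hp⟩ := exists_eq_ciInf_of_finite
      (f := fun p : {p : Fin N × Fin N // p.1 ≠ p.2} => |cs p.val.1 - cs p.val.2|)
    rw [← hp]
    exact abs_pos.mpr (sub_ne_zero.mpr fun h => p.prop (hmono.injective h))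
  have hcstar_le : ∀ p q : Fin N, p ≠ q → cstar ≤ |cs p - cs q| := by
    intro p q hpq
    rw [hcstar]
    exact ciInf_le (Set.Finite.bddBelow (Set.finite_range _))
      (⟨(p, q), hpq⟩ : {p : Fin N × Fin N // p.1 ≠ p.2})
  -- profile bounds
  choose A hApos hAbound using fun i : Fin N =>
    profile_bound α β (ωs i) (cs i) (hc i) (hC1 i) (hC2 i)
  obtain ⟨C0, hC0⟩ := Finite.exists_le (fun i : Fin N => 2 * A i / r i)
  obtain ⟨X0, hX0⟩ := Finite.exists_le (fun i : Fin N => |xs i|)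
  set X : ℝ := max X0 0 with hX_def
  have hXnn : 0 ≤ X := le_max_right _ _
  have hXb : ∀ i, |xs i| ≤ X := fun i => le_trans (hX0 i) (le_max_left _ _)
  refine ⟨max C0 1, max 1 (max (64 / cstar^2) (8 * (X + 1) / cstar)),
    lt_of_lt_of_le one_pos (le_max_right _ _),
    lt_of_lt_of_le one_pos (le_max_left _ _), ?_⟩
  intro t ht j k hjk m
  have hCpos : (0:ℝ) < max C0 1 := lt_of_lt_of_le one_pos (le_max_right _ _)
  have ht1 : 1 ≤ t := le_trans (le_max_left _ _) ht
  have htpos : 0 < t := by linarith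
  have hsqt : 0 < Real.sqrt t := Real.sqrt_pos.mpr htpos
  have h64 : 64 / cstar^2 ≤ t :=
    le_trans (le_trans (le_max_left _ _) (le_max_right _ _)) ht
  have h8X : 8 * (X + 1) / cstar ≤ t :=
    le_trans (le_trans (le_max_right _ _) (le_max_right _ _)) ht
  have hsqrt_le : Real.sqrt t ≤ cstar / 8 * t := by
    have h8 : 8 / cstar ≤ Real.sqrt t := by
      rw [show (8:ℝ) / cstar = Real.sqrt ((8 / cstar)^2) from
        (Real.sqrt_sq (by positivity)).symm]
      apply Real.sqrt_le_sqrt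
      rw [show ((8:ℝ) / cstar)^2 = 64 / cstar^2 by rw [div_pow]; norm_num]
      exact h64
    have hsq : Real.sqrt t * Real.sqrt t = t := Real.mul_self_sqrt htpos.le
    have h9 : 8 / cstar * Real.sqrt t ≤ Real.sqrt t * Real.sqrt t :=
      mul_le_mul_of_nonneg_right h8 hsqt.le
    have h11 := mul_le_mul_of_nonneg_left h9 hcs_pos.le
    have h12 : cstar * (8 / cstar * Real.sqrt t) = 8 * Real.sqrt t := by
      field_simp
    have h13 : cstar * (Real.sqrt t * Real.sqrt t) = cstar * t := by rw [hsq]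
    rw [div_mul_eq_mul_div, le_div_iff₀ (by norm_num : (0:ℝ) < 8)]
    linarith [h11, h12, h13]
  have hXle : X ≤ cstar / 8 * t := by
    rw [div_le_iff₀ hcs_pos] at h8X
    nlinarith
  have hxk1 : xs k ≤ X := le_trans (le_abs_self _) (hXb k)
  have hxk2 : -X ≤ xs k := neg_le_of_abs_le (hXb k)
  -- the profile bound for k
  have hFb : ∀ ξ : ℝ, ‖solProfile α β (ωs k) (cs k) m ξ‖
      + ‖deriv (solProfile α β (ωs k) (cs k) m) ξ‖ ≤ A k * Real.exp (-(r k * |ξ|)) :=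
    fun ξ => hAbound k m ξ
  have hF0 : ∀ ξ : ℝ, 0 ≤ ‖solProfile α β (ωs k) (cs k) m ξ‖
      + ‖deriv (solProfile α β (ωs k) (cs k) m) ξ‖ := fun ξ => by positivity
  have hCk : 2 * A k / r k ≤ max C0 1 := le_trans (hC0 k) (le_max_left _ _)
  simp_rw [show ∀ x : ℝ, x - cs k * t - xs k = x - (cs k * t + xs k) from fun x => by ring]
  rcases hjk.lt_or_gt with hlt | hlt
  · -- j < k : soliton to the right, χ supported to the left
    have hjk' : (j : ℕ) < (k : ℕ) := hlt
    have hj1lt : (j : ℕ) + 1 < N := by omega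
    set j1 : Fin N := ⟨(j : ℕ) + 1, hj1lt⟩ with hj1_def
    have hgap : cstar ≤ cs j1 - cs j := by
      have h := hcstar_le j j1 (fun h => by simp [hj1_def, Fin.ext_iff] at h)
      have hlt2 : cs j < cs j1 := hmono (by rw [Fin.lt_def]; simp [hj1_def])
      rw [abs_of_neg (by linarith)] at h
      linarith
    have hk_ge : cs j1 ≤ cs k := hmono.monotone (by
      rw [Fin.le_def]; simp only [hj1_def, Fin.val_mk]; omega)
    have hvan : ∀ x : ℝ, ((cs j + cs j1) / 2) * t + Real.sqrt t ≤ x →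
        chiCut N cs ψb j x t = 0 :=
      fun x hx => chiCut_zero_right hψb1 hmono j j1 rfl htpos hx
    have hmain := halfline_bound' (u := cs k * t + xs k)
      (s := ((cs j + cs j1) / 2) * t + Real.sqrt t) (hApos k) (hrpos k)
      (fun ξ => ‖solProfile α β (ωs k) (cs k) m ξ‖
        + ‖deriv (solProfile α β (ωs k) (cs k) m) ξ‖)
      (fun x => chiCut N cs ψb j x t) hF0 hFb
      (fun x => chiCut_abs_le hψbb j x t) hvan
    refine le_trans hmain ?_
    have hdist : cstar / 4 * t ≤ cs k * t + xs k - (((cs j + cs j1) / 2) * t + Real.sqrt t) := by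
      have h1 : cstar / 2 * t ≤ (cs k - (cs j + cs j1) / 2) * t :=
        mul_le_mul_of_nonneg_right (by linarith) htpos.le
      nlinarith [hsqrt_le, hXle]
    have hexp : Real.exp (-(r k * (cs k * t + xs k - (((cs j + cs j1) / 2) * t + Real.sqrt t))))
        ≤ Real.exp (-4 * Real.sqrt ωstar * cstar * t) := by
      apply Real.exp_le_exp.mpr
      have p1 := mul_le_mul_of_nonneg_left hdist (hrpos k).le
      have p2 := mul_le_mul_of_nonneg_right (hrate k)
        (by positivity : (0:ℝ) ≤ cstar / 4 * t)
      nlinarith [p1, p2]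
    exact mul_le_mul hCk hexp (Real.exp_pos _).le hCpos.le
  · -- k < j : soliton to the left, χ supported to the right
    have hjk' : (k : ℕ) < (j : ℕ) := hlt
    have hjplt : (j : ℕ) - 1 < N := by omega
    set jp : Fin N := ⟨(j : ℕ) - 1, hjplt⟩ with hjp_def
    have hgap : cstar ≤ cs j - cs jp := by
      have h := hcstar_le jp j (fun h => by simp [hjp_def, Fin.ext_iff] at h; omega)
      have hlt2 : cs jp < cs j := hmono (by rw [Fin.lt_def]; simp only [hjp_def, Fin.val_mk]; omega)
      rw [abs_of_neg (by linarith)] at h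
      linarith
    have hk_le : cs k ≤ cs jp := hmono.monotone (by
      rw [Fin.le_def]; simp only [hjp_def, Fin.val_mk]; omega)
    have hvan : ∀ x : ℝ, x ≤ ((cs jp + cs j) / 2) * t - Real.sqrt t →
        chiCut N cs ψb j x t = 0 :=
      fun x hx => chiCut_zero_left hψb0 hmono j jp rfl (by omega) htpos hx
    have hmain := halfline_bound (u := cs k * t + xs k)
      (s := ((cs jp + cs j) / 2) * t - Real.sqrt t) (hApos k) (hrpos k)
      (fun ξ => ‖solProfile α β (ωs k) (cs k) m ξ‖
        + ‖deriv (solProfile α β (ωs k) (cs k) m) ξ‖)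
      (fun x => chiCut N cs ψb j x t) hF0 hFb
      (fun x => chiCut_abs_le hψbb j x t) hvan
    refine le_trans hmain ?_
    have hdist : cstar / 4 * t ≤ ((cs jp + cs j) / 2) * t - Real.sqrt t
        - (cs k * t + xs k) := by
      have h1 : cstar / 2 * t ≤ ((cs jp + cs j) / 2 - cs k) * t :=
        mul_le_mul_of_nonneg_right (by linarith) htpos.le
      nlinarith [hsqrt_le, hXle]
    have hexp : Real.exp (-(r k * (((cs jp + cs j) / 2) * t - Real.sqrt t
        - (cs k * t + xs k)))) ≤ Real.exp (-4 * Real.sqrt ωstar * cstar * t) := by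
      apply Real.exp_le_exp.mpr
      have p1 := mul_le_mul_of_nonneg_left hdist (hrpos k).le
      have p2 := mul_le_mul_of_nonneg_right (hrate k)
        (by positivity : (0:ℝ) ≤ cstar / 4 * t)
      nlinarith [p1, p2]
    exact mul_le_mul hCk hexp (Real.exp_pos _).le hCpos.le
end

section
/- Let a < b be real. Suppose u, ρ : ℝ × (a,b) → ℂ and v, n : ℝ × (a,b) → ℝ are C^∞ jointly in (x,t), for every t ∈ (a,b) the maps x ↦ u(x,t), ρ(x,t), v(x,t), n(x,t) are Schwartz functions of x (uniformly on compact subsets of (a,b)), and (u, ρ, v, n) satisfies system (S) at every point. Then the energy E(t) = ∫_ℝ ( |u|² + |ρ|² + |∂_x u|² + α·|u|²·v + (β/2)·|u|⁴ + (α/2)·v² + (α/2)·n² ) dx is constant on (a,b). -/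
open MeasureTheory Filter

/-- `f(·, t)` is Schwartz in `x`, uniformly in `t` on compact subsets of `(a, b)`. -/
def UnifSchwartz {E : Type*} [NormedAddCommGroup E] [NormedSpace ℝ E]
    (f : ℝ → ℝ → E) (a b : ℝ) : Prop :=
  ∀ K : Set ℝ, IsCompact K → K ⊆ Set.Ioo a b →
    ∀ k m : ℕ, ∃ C : ℝ, ∀ t ∈ K, ∀ x : ℝ,
      |x|^k * ‖iteratedDeriv m (fun y => f y t) x‖ ≤ C

noncomputable section KGZaux

open Set Metric

/-- real dot product of complex numbers -/
def cdot (z w : ℂ) : ℝ := z.re * w.re + z.im * w.im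

lemma norm_sq_eq (z : ℂ) : ‖z‖^2 = z.re^2 + z.im^2 := by
  rw [Complex.sq_norm, Complex.normSq_apply]; ring

lemma abs_cdot_le (z w : ℂ) : |cdot z w| ≤ ‖z‖ * ‖w‖ := by
  have hz := norm_sq_eq z
  have hw := norm_sq_eq w
  have h0 : 0 ≤ ‖z‖ * ‖w‖ := mul_nonneg (norm_nonneg _) (norm_nonneg _)
  have hsq : (cdot z w)^2 ≤ (‖z‖ * ‖w‖)^2 := by
    simp only [cdot, mul_pow]
    nlinarith [sq_nonneg (z.re*w.im - z.im*w.re)]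
  have habs : |cdot z w| ^ 2 ≤ (‖z‖*‖w‖)^2 := by rwa [sq_abs]
  nlinarith [abs_nonneg (cdot z w)]

lemma hd_re {c : ℝ → ℂ} {c' : ℂ} {t : ℝ} (h : HasDerivAt c c' t) :
    HasDerivAt (fun s => (c s).re) c'.re t :=
  Complex.reCLM.hasFDerivAt.comp_hasDerivAt t h

lemma hd_im {c : ℝ → ℂ} {c' : ℂ} {t : ℝ} (h : HasDerivAt c c' t) :
    HasDerivAt (fun s => (c s).im) c'.im t :=
  Complex.imCLM.hasFDerivAt.comp_hasDerivAt t h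

lemma hd_cdot {c d : ℝ → ℂ} {c' d' : ℂ} {t : ℝ} (hc : HasDerivAt c c' t)
    (hd : HasDerivAt d d' t) :
    HasDerivAt (fun s => cdot (c s) (d s)) (cdot c' (d t) + cdot (c t) d') t := by
  have h := ((hd_re hc).mul (hd_re hd)).add ((hd_im hc).mul (hd_im hd))
  simp only [cdot]
  exact h.congr_deriv (by ring)

lemma hd_normsq {c : ℝ → ℂ} {c' : ℂ} {t : ℝ} (h : HasDerivAt c c' t) :
    HasDerivAt (fun s => ‖c s‖^2) (2 * cdot (c t) c') t := by
  have h2 := hd_cdot h h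
  have heq : (fun s => ‖c s‖^2) = fun s => cdot (c s) (c s) := by
    funext s; rw [norm_sq_eq]; simp [cdot]; ring
  rw [heq]
  convert h2 using 1
  simp [cdot]; ring

lemma cont_cdot {A B : ℝ → ℂ} (hA : Continuous A) (hB : Continuous B) :
    Continuous (fun x => cdot (A x) (B x)) := by
  simp only [cdot]
  exact ((Complex.continuous_re.comp hA).mul (Complex.continuous_re.comp hB)).add
    ((Complex.continuous_im.comp hA).mul (Complex.continuous_im.comp hB))

/-- bounded with quadratic decay, uniformly in `t ∈ K` -/
def BD (K : Set ℝ) {E : Type*} [NormedAddCommGroup E] (f : ℝ → ℝ → E) : Prop :=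
  ∃ C : ℝ, 0 ≤ C ∧ ∀ t ∈ K, ∀ x : ℝ, ‖f x t‖ ≤ C ∧ (1 + x^2) * ‖f x t‖ ≤ C

variable {K : Set ℝ}

lemma BD.add {E : Type*} [NormedAddCommGroup E] {f g : ℝ → ℝ → E}
    (hf : BD K f) (hg : BD K g) : BD K (fun x t => f x t + g x t) := by
  obtain ⟨C, hC0, hC⟩ := hf; obtain ⟨D, hD0, hD⟩ := hg
  refine ⟨C + D, by linarith, fun t ht x => ?_⟩
  obtain ⟨h1, h2⟩ := hC t ht x; obtain ⟨h3, h4⟩ := hD t ht x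
  have hx : (0:ℝ) ≤ 1 + x^2 := by positivity
  constructor
  · exact (norm_add_le _ _).trans (by linarith)
  · calc (1+x^2) * ‖f x t + g x t‖ ≤ (1+x^2) * (‖f x t‖ + ‖g x t‖) :=
        mul_le_mul_of_nonneg_left (norm_add_le _ _) hx
    _ = (1+x^2)*‖f x t‖ + (1+x^2)*‖g x t‖ := by ring
    _ ≤ C + D := by linarith

lemma BD.neg {E : Type*} [NormedAddCommGroup E] {f : ℝ → ℝ → E}
    (hf : BD K f) : BD K (fun x t => -f x t) := by
  obtain ⟨C, hC0, hC⟩ := hf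
  exact ⟨C, hC0, fun t ht x => by simpa using hC t ht x⟩

lemma BD.mul {f g : ℝ → ℝ → ℝ} (hf : BD K f) (hg : BD K g) :
    BD K (fun x t => f x t * g x t) := by
  obtain ⟨C, hC0, hC⟩ := hf; obtain ⟨D, hD0, hD⟩ := hg
  refine ⟨C * D, mul_nonneg hC0 hD0, fun t ht x => ?_⟩
  obtain ⟨h1, h2⟩ := hC t ht x; obtain ⟨h3, h4⟩ := hD t ht x
  have hx : (0:ℝ) ≤ 1 + x^2 := by positivity
  constructor
  · rw [Real.norm_eq_abs, abs_mul]
    exact mul_le_mul (by simpa using h1) (by simpa using h3) (abs_nonneg _) hC0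
  · rw [Real.norm_eq_abs, abs_mul, ← mul_assoc]
    exact mul_le_mul (by simpa using h2) (by simpa using h3) (abs_nonneg _) hC0

lemma BD.dotc {f g : ℝ → ℝ → ℂ} (hf : BD K f) (hg : BD K g) :
    BD K (fun x t => cdot (f x t) (g x t)) := by
  obtain ⟨C, hC0, hC⟩ := hf; obtain ⟨D, hD0, hD⟩ := hg
  refine ⟨C * D, mul_nonneg hC0 hD0, fun t ht x => ?_⟩
  obtain ⟨h1, h2⟩ := hC t ht x; obtain ⟨h3, h4⟩ := hD t ht x
  have hx : (0:ℝ) ≤ 1 + x^2 := by positivity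
  have key := abs_cdot_le (f x t) (g x t)
  simp only [Real.norm_eq_abs] at *
  constructor
  · exact key.trans (mul_le_mul h1 h3 (norm_nonneg _) hC0)
  · calc (1+x^2) * |_root_.cdot (f x t) (g x t)| ≤ (1+x^2) * (‖f x t‖ * ‖g x t‖) :=
          mul_le_mul_of_nonneg_left key hx
      _ = ((1+x^2) * ‖f x t‖) * ‖g x t‖ := by ring
      _ ≤ C * D := mul_le_mul h2 h3 (norm_nonneg _) hC0

lemma BD.const_mul (c : ℝ) {f : ℝ → ℝ → ℝ} (hf : BD K f) :
    BD K (fun x t => c * f x t) := by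
  obtain ⟨C, hC0, hC⟩ := hf
  refine ⟨|c| * C, mul_nonneg (abs_nonneg _) hC0, fun t ht x => ?_⟩
  obtain ⟨h1, h2⟩ := hC t ht x
  constructor
  · rw [Real.norm_eq_abs, abs_mul]
    exact mul_le_mul_of_nonneg_left (by simpa using h1) (abs_nonneg _)
  · rw [Real.norm_eq_abs, abs_mul]
    calc (1+x^2) * (|c| * |f x t|) = |c| * ((1+x^2) * |f x t|) := by ring
      _ ≤ |c| * C := mul_le_mul_of_nonneg_left (by simpa using h2) (abs_nonneg _)

lemma BD.bound {f : ℝ → ℝ → ℝ} (hf : BD K f) :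
    ∃ C : ℝ, 0 ≤ C ∧ ∀ t ∈ K, ∀ x : ℝ, |f x t| ≤ C * (1 + x^2)⁻¹ := by
  obtain ⟨C, hC0, hC⟩ := hf
  refine ⟨C, hC0, fun t ht x => ?_⟩
  have hx : (0:ℝ) < 1 + x^2 := by positivity
  have h2 := (hC t ht x).2
  rw [Real.norm_eq_abs] at h2
  calc |f x t| = ((1+x^2) * |f x t|) * (1+x^2)⁻¹ := by field_simp
    _ ≤ C * (1+x^2)⁻¹ := mul_le_mul_of_nonneg_right h2 (by positivity)

lemma BD.integrable_slice {f : ℝ → ℝ → ℝ} (hf : BD K f) {t : ℝ} (ht : t ∈ K)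
    (hc : Continuous (fun x => f x t)) : Integrable (fun x => f x t) := by
  obtain ⟨C, hC0, hC⟩ := hf.bound
  refine Integrable.mono' (integrable_inv_one_add_sq.const_mul C) hc.aestronglyMeasurable ?_
  exact Filter.Eventually.of_forall fun x => by
    simpa [Real.norm_eq_abs] using hC t ht x

lemma BD.tendsto_atTop {f : ℝ → ℝ → ℝ} (hf : BD K f) {t : ℝ} (ht : t ∈ K) :
    Tendsto (fun x => f x t) atTop (nhds 0) := by
  obtain ⟨C, hC0, hC⟩ := hf.bound
  have hlim : Tendsto (fun x : ℝ => C * (1+x^2)⁻¹) atTop (nhds 0) := by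
    have h2 : Tendsto (fun x : ℝ => 1 + x^2) atTop atTop :=
      tendsto_atTop_add_const_left _ 1 (tendsto_pow_atTop (by norm_num))
    simpa using h2.inv_tendsto_atTop.const_mul C
  exact squeeze_zero_norm (fun x => by simpa [Real.norm_eq_abs] using hC t ht x) hlim

lemma BD.tendsto_atBot {f : ℝ → ℝ → ℝ} (hf : BD K f) {t : ℝ} (ht : t ∈ K) :
    Tendsto (fun x => f x t) atBot (nhds 0) := by
  obtain ⟨C, hC0, hC⟩ := hf.bound
  have hlim : Tendsto (fun x : ℝ => C * (1+x^2)⁻¹) atBot (nhds 0) := by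
    have h1 : Tendsto (fun x : ℝ => x^2) atBot atTop := by
      have h := (tendsto_pow_atTop (α := ℝ) (n := 2) (by norm_num)).comp tendsto_neg_atBot_atTop
      simpa [Function.comp_def, neg_sq] using h
    have h2 : Tendsto (fun x : ℝ => 1 + x^2) atBot atTop :=
      tendsto_atTop_add_const_left _ 1 h1
    simpa using h2.inv_tendsto_atTop.const_mul C
  exact squeeze_zero_norm (fun x => by simpa [Real.norm_eq_abs] using hC t ht x) hlim

lemma bd_of_unifSchwartz {a b : ℝ} {E : Type*} [NormedAddCommGroup E] [NormedSpace ℝ E]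
    {f : ℝ → ℝ → E} (hf : UnifSchwartz f a b) {K : Set ℝ} (hK : IsCompact K)
    (hKs : K ⊆ Set.Ioo a b) (m : ℕ) :
    BD K (fun x t => iteratedDeriv m (fun y => f y t) x) := by
  obtain ⟨C0, hC0⟩ := hf K hK hKs 0 m
  obtain ⟨C2, hC2⟩ := hf K hK hKs 2 m
  refine ⟨max C0 0 + max C2 0, by positivity, fun t ht x => ?_⟩
  have h0 := hC0 t ht x
  have h2 := hC2 t ht x
  rw [pow_zero, one_mul] at h0
  rw [sq_abs] at h2
  constructor
  · exact h0.trans (by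
      have := le_max_left C0 (0:ℝ)
      linarith [le_max_right C2 (0:ℝ)])
  · have heq : (1 + x^2) * ‖iteratedDeriv m (fun y => f y t) x‖
        = ‖iteratedDeriv m (fun y => f y t) x‖ + x^2 * ‖iteratedDeriv m (fun y => f y t) x‖ := by
      ring
    rw [heq]
    have := le_max_left C0 (0:ℝ)
    have := le_max_left C2 (0:ℝ)
    linarith

variable {a b : ℝ} {E : Type*} [NormedAddCommGroup E] [NormedSpace ℝ E]

lemma slice_x {f : ℝ → ℝ → E}
    (hf : ContDiffOn ℝ (⊤ : ℕ∞) (fun p : ℝ × ℝ => f p.1 p.2) (Set.univ ×ˢ Set.Ioo a b))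
    {t : ℝ} (ht : t ∈ Set.Ioo a b) : ContDiff ℝ (⊤ : ℕ∞) (fun y => f y t) := by
  rw [← contDiffOn_univ]
  exact hf.comp (contDiff_id.prodMk contDiff_const).contDiffOn
    (fun y _ => by simp [Set.mem_prod, ht])

lemma slice_t {f : ℝ → ℝ → E}
    (hf : ContDiffOn ℝ (⊤ : ℕ∞) (fun p : ℝ × ℝ => f p.1 p.2) (Set.univ ×ˢ Set.Ioo a b))
    (x : ℝ) : ContDiffOn ℝ (⊤ : ℕ∞) (fun s => f x s) (Set.Ioo a b) :=
  hf.comp (contDiff_const.prodMk contDiff_id).contDiffOn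
    (fun s hs => by simp [Set.mem_prod, hs])

lemma hasDerivAt_t {f : ℝ → ℝ → E}
    (hf : ContDiffOn ℝ (⊤ : ℕ∞) (fun p : ℝ × ℝ => f p.1 p.2) (Set.univ ×ˢ Set.Ioo a b))
    (x : ℝ) {t : ℝ} (ht : t ∈ Set.Ioo a b) :
    HasDerivAt (fun s => f x s) (deriv (fun s => f x s) t) t := by
  have h := ((slice_t hf x).differentiableOn (by simp)).differentiableAt
    (Ioo_mem_nhds ht.1 ht.2)
  exact h.hasDerivAt

lemma clairaut {f g : ℝ → ℝ → E}
    (hf : ContDiffOn ℝ (⊤ : ℕ∞) (fun p : ℝ × ℝ => f p.1 p.2) (Set.univ ×ˢ Set.Ioo a b))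
    (hfg : ∀ x : ℝ, ∀ t ∈ Set.Ioo a b, deriv (fun s => f x s) t = g x t)
    (x : ℝ) {t : ℝ} (ht : t ∈ Set.Ioo a b) :
    HasDerivAt (fun s => deriv (fun y => f y s) x) (deriv (fun y => g y t) x) t := by
  set D : Set (ℝ × ℝ) := Set.univ ×ˢ Set.Ioo a b with hD
  have hDo : IsOpen D := isOpen_univ.prod isOpen_Ioo
  set Fu : ℝ × ℝ → E := fun p => f p.1 p.2 with hFu
  have hxt : (x, t) ∈ D := by simp [hD, Set.mem_prod, ht]
  have hFd : ∀ p ∈ D, HasFDerivAt Fu (fderiv ℝ Fu p) p := fun p hp =>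
    (((hf.contDiffAt (hDo.mem_nhds hp))).differentiableAt (by simp)).hasFDerivAt
  have hφ : ContDiffOn ℝ (⊤ : ℕ∞) (fderiv ℝ Fu) D :=
    hf.fderiv_of_isOpen hDo (by exact_mod_cast le_top)
  have hφd : HasFDerivAt (fderiv ℝ Fu) (fderiv ℝ (fderiv ℝ Fu) (x, t)) (x, t) :=
    ((hφ.contDiffAt (hDo.mem_nhds hxt)).differentiableAt (by simp)).hasFDerivAt
  have hsym := second_derivative_symmetric_of_eventually
    (Filter.eventually_of_mem (hDo.mem_nhds hxt) (fun p hp => hFd p hp)) hφd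
  have hxdir : ∀ p ∈ D, HasDerivAt (fun y => f y p.2) (fderiv ℝ Fu p ((1:ℝ), (0:ℝ))) p.1 := by
    rintro ⟨y, s⟩ hp
    exact (hFd (y, s) hp).comp_hasDerivAt y ((hasDerivAt_id y).prodMk (hasDerivAt_const y s))
  have htdir : ∀ p ∈ D, HasDerivAt (fun s => f p.1 s) (fderiv ℝ Fu p ((0:ℝ), (1:ℝ))) p.2 := by
    rintro ⟨y, s⟩ hp
    exact (hFd (y, s) hp).comp_hasDerivAt s ((hasDerivAt_const s y).prodMk (hasDerivAt_id s))
  have hts : (fun s => fderiv ℝ Fu (x, s) ((1:ℝ), (0:ℝ)))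
      =ᶠ[nhds t] (fun s => deriv (fun y => f y s) x) := by
    filter_upwards [Ioo_mem_nhds ht.1 ht.2] with s hs
    exact ((hxdir (x, s) (by simp [hD, Set.mem_prod, hs])).deriv).symm
  have hcurve : HasDerivAt (fun s : ℝ => ((x : ℝ), s)) ((0:ℝ), (1:ℝ)) t :=
    (hasDerivAt_const t x).prodMk (hasDerivAt_id t)
  have hmain : HasDerivAt (fun s => fderiv ℝ Fu (x, s) ((1:ℝ), (0:ℝ)))
      (fderiv ℝ (fderiv ℝ Fu) (x, t) ((0:ℝ), (1:ℝ)) ((1:ℝ), (0:ℝ))) t := by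
    have h1 : HasDerivAt (fun s => fderiv ℝ Fu (x, s))
        (fderiv ℝ (fderiv ℝ Fu) (x, t) ((0:ℝ), (1:ℝ))) t := hφd.comp_hasDerivAt t hcurve
    exact (ContinuousLinearMap.apply ℝ E ((1:ℝ), (0:ℝ))).hasFDerivAt.comp_hasDerivAt _ h1
  have hL : HasDerivAt (fun s => deriv (fun y => f y s) x)
      (fderiv ℝ (fderiv ℝ Fu) (x, t) ((0:ℝ), (1:ℝ)) ((1:ℝ), (0:ℝ))) t :=
    hmain.congr_of_eventuallyEq hts.symm
  have hg_eq : (fun y => g y t) = fun y => fderiv ℝ Fu (y, t) ((0:ℝ), (1:ℝ)) := by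
    funext y
    rw [← hfg y t ht]
    exact (htdir (y, t) (by simp [hD, Set.mem_prod, ht])).deriv
  have hcurve2 : HasDerivAt (fun y : ℝ => (y, (t : ℝ))) ((1:ℝ), (0:ℝ)) x :=
    (hasDerivAt_id x).prodMk (hasDerivAt_const x t)
  have hmain2 : HasDerivAt (fun y => fderiv ℝ Fu (y, t) ((0:ℝ), (1:ℝ)))
      (fderiv ℝ (fderiv ℝ Fu) (x, t) ((1:ℝ), (0:ℝ)) ((0:ℝ), (1:ℝ))) x := by
    have h1 : HasDerivAt (fun y => fderiv ℝ Fu (y, t))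
        (fderiv ℝ (fderiv ℝ Fu) (x, t) ((1:ℝ), (0:ℝ))) x := hφd.comp_hasDerivAt x hcurve2
    exact (ContinuousLinearMap.apply ℝ E ((0:ℝ), (1:ℝ))).hasFDerivAt.comp_hasDerivAt _ h1
  have hR : HasDerivAt (fun y => g y t)
      (fderiv ℝ (fderiv ℝ Fu) (x, t) ((1:ℝ), (0:ℝ)) ((0:ℝ), (1:ℝ))) x := by
    rw [hg_eq]; exact hmain2
  rw [hR.deriv, ← hsym ((0:ℝ), (1:ℝ)) ((1:ℝ), (0:ℝ))]
  exact hL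

/-- time derivative of the energy density -/
lemma hd_F_general {U R Ux : ℝ → ℂ} {V N : ℝ → ℝ} {t : ℝ}
    {U' R' Ux' : ℂ} {V' N' : ℝ} (α β : ℝ)
    (hU : HasDerivAt U U' t) (hR : HasDerivAt R R' t) (hUx : HasDerivAt Ux Ux' t)
    (hV : HasDerivAt V V' t) (hN : HasDerivAt N N' t) :
    HasDerivAt (fun s => ‖U s‖^2 + ‖R s‖^2 + ‖Ux s‖^2 + α * ‖U s‖^2 * V s
        + (β/2) * ‖U s‖^4 + (α/2) * (V s)^2 + (α/2) * (N s)^2)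
      (2*cdot (U t) U' + 2*cdot (R t) R' + 2*cdot (Ux t) Ux'
        + α*((2*cdot (U t) U') * V t + ‖U t‖^2 * V')
        + (β/2)*(2*‖U t‖^2*(2*cdot (U t) U'))
        + (α/2)*(2*(V t)*V') + (α/2)*(2*(N t)*N')) t := by
  have hU2 := hd_normsq hU
  have hR2 := hd_normsq hR
  have hUx2 := hd_normsq hUx
  have hterm4 : HasDerivAt (fun s => (β/2) * ‖U s‖^4)
      ((β/2)*(2*‖U t‖^2*(2*cdot (U t) U'))) t := by
    have heq : (fun s => (β/2) * ‖U s‖^4) = fun s => (β/2) * (‖U s‖^2 * ‖U s‖^2) := by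
      funext s; ring
    rw [heq]
    have := (hU2.mul hU2).const_mul (β/2)
    exact this.congr_deriv (by ring)
  have hterm3 : HasDerivAt (fun s => α * ‖U s‖^2 * V s)
      (α*((2*cdot (U t) U') * V t + ‖U t‖^2 * V')) t := by
    have := (hU2.const_mul α).mul hV
    have heq : (fun s => α * ‖U s‖^2 * V s) = fun s => (α * ‖U s‖^2) * V s := by
      funext s; ring
    rw [heq]
    exact this.congr_deriv (by ring)
  have hterm6 : HasDerivAt (fun s => (α/2) * (V s)^2) ((α/2)*(2*(V t)*V')) t := by
    have := (hV.mul hV).const_mul (α/2)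
    have heq : (fun s => (α/2) * (V s)^2) = fun s => (α/2) * (V s * V s) := by
      funext s; ring
    rw [heq]; exact this.congr_deriv (by ring)
  have hterm7 : HasDerivAt (fun s => (α/2) * (N s)^2) ((α/2)*(2*(N t)*N')) t := by
    have := (hN.mul hN).const_mul (α/2)
    have heq : (fun s => (α/2) * (N s)^2) = fun s => (α/2) * (N s * N s) := by
      funext s; ring
    rw [heq]; exact this.congr_deriv (by ring)
  exact ((((((hU2.add hR2).add hUx2).add hterm3).add hterm4).add hterm6).add hterm7)

/-- the time-derivative value equals the x-derivative of the flux `W` -/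
lemma value_identity (α β : ℝ) (U R Ux Uxx Rx : ℂ) (V N Vx Nx : ℝ) :
    2*cdot U (-R) + 2*cdot R (-Uxx + U + (α:ℂ)*(V:ℂ)*U + (β:ℂ)*((‖U‖^2 : ℝ):ℂ)*U)
      + 2*cdot Ux (-Rx)
      + α*((2*cdot U (-R)) * V + ‖U‖^2 * Nx)
      + (β/2)*(2*‖U‖^2*(2*cdot U (-R)))
      + (α/2)*(2*V*Nx) + (α/2)*(2*N*(Vx + 2*cdot U Ux))
    = -2*(cdot Rx (Ux) + cdot R (Uxx))
      + α*((2*cdot U Ux + Vx) * N + (cdot U U + V) * Nx) := by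
  simp only [cdot, norm_sq_eq, Complex.add_re, Complex.add_im, Complex.neg_re, Complex.neg_im,
    Complex.mul_re, Complex.mul_im, Complex.ofReal_re, Complex.ofReal_im]
  ring

/-- x-derivative of the flux `W` -/
lemma hd_W_general {R Ux U : ℝ → ℂ} {V N : ℝ → ℝ} {x : ℝ} {R' Ux' U' : ℂ} {V' N' : ℝ} (α : ℝ)
    (hR : HasDerivAt R R' x) (hUx : HasDerivAt Ux Ux' x) (hU : HasDerivAt U U' x)
    (hV : HasDerivAt V V' x) (hN : HasDerivAt N N' x) :
    HasDerivAt (fun y => -2 * cdot (R y) (Ux y) + α * (cdot (U y) (U y) + V y) * N y)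
      (-2*(cdot R' (Ux x) + cdot (R x) Ux')
        + α*((2*cdot (U x) U' + V') * N x + (cdot (U x) (U x) + V x) * N')) x := by
  have h1 := (hd_cdot hR hUx).const_mul (-2 : ℝ)
  have h2 : HasDerivAt (fun y => α * (cdot (U y) (U y) + V y) * N y)
      (α*((2*cdot (U x) U' + V') * N x + (cdot (U x) (U x) + V x) * N')) x := by
    have hin := ((hd_cdot hU hU).add hV).const_mul α
    have := hin.mul hN
    have heq : (fun y => α * (cdot (U y) (U y) + V y) * N y)
        = fun y => (α * (cdot (U y) (U y) + V y)) * N y := by funext y; ring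
    rw [heq]
    exact this.congr_deriv (by simp only [cdot, Pi.add_apply]; ring)
  exact h1.add h2

lemma integral_eq_zero_of_antideriv {W g : ℝ → ℝ} (hd : ∀ x, HasDerivAt W (g x) x)
    (hgi : Integrable g) (htop : Tendsto W atTop (nhds 0))
    (hbot : Tendsto W atBot (nhds 0)) :
    ∫ x, g x = 0 := by
  have h1 : ∫ x in Set.Ioi (0:ℝ), g x = 0 - W 0 :=
    integral_Ioi_of_hasDerivAt_of_tendsto' (fun x _ => hd x) hgi.integrableOn htop
  have h2 : ∫ x in Set.Iic (0:ℝ), g x = W 0 - 0 :=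
    integral_Iic_of_hasDerivAt_of_tendsto' (fun x _ => hd x) hgi.integrableOn hbot
  rw [← intervalIntegral.integral_Iic_add_Ioi (b := (0:ℝ)) hgi.integrableOn hgi.integrableOn,
    h1, h2]
  ring

end KGZaux

theorem stmt17 (α β a b : ℝ) (hβ : β ≠ 0) (hab : a < b)
    (u ρ : ℝ → ℝ → ℂ) (v n : ℝ → ℝ → ℝ)
    (hu : ContDiffOn ℝ (⊤ : ℕ∞) (fun p : ℝ × ℝ => u p.1 p.2) (Set.univ ×ˢ Set.Ioo a b))
    (hρ : ContDiffOn ℝ (⊤ : ℕ∞) (fun p : ℝ × ℝ => ρ p.1 p.2) (Set.univ ×ˢ Set.Ioo a b))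
    (hv : ContDiffOn ℝ (⊤ : ℕ∞) (fun p : ℝ × ℝ => v p.1 p.2) (Set.univ ×ˢ Set.Ioo a b))
    (hn : ContDiffOn ℝ (⊤ : ℕ∞) (fun p : ℝ × ℝ => n p.1 p.2) (Set.univ ×ˢ Set.Ioo a b))
    (hus : UnifSchwartz u a b) (hρs : UnifSchwartz ρ a b)
    (hvs : UnifSchwartz v a b) (hns : UnifSchwartz n a b)
    (heq1 : ∀ x : ℝ, ∀ t ∈ Set.Ioo a b, deriv (fun s => u x s) t = -ρ x t)
    (heq2 : ∀ x : ℝ, ∀ t ∈ Set.Ioo a b,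
      deriv (fun s => ρ x s) t =
        -(deriv (fun y => deriv (fun z => u z t) y) x) + u x t
          + (α : ℂ) * ((v x t : ℝ) : ℂ) * u x t
          + (β : ℂ) * ((‖u x t‖^2 : ℝ) : ℂ) * u x t)
    (heq3 : ∀ x : ℝ, ∀ t ∈ Set.Ioo a b,
      deriv (fun s => v x s) t = deriv (fun y => n y t) x)
    (heq4 : ∀ x : ℝ, ∀ t ∈ Set.Ioo a b,
      deriv (fun s => n x s) t - deriv (fun y => v y t) x
        = deriv (fun y => ‖u y t‖^2) x) :
    ∀ t₁ ∈ Set.Ioo a b, ∀ t₂ ∈ Set.Ioo a b,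
      (∫ x : ℝ, (‖u x t₁‖^2 + ‖ρ x t₁‖^2 + ‖deriv (fun y => u y t₁) x‖^2
        + α * ‖u x t₁‖^2 * v x t₁ + (β / 2) * ‖u x t₁‖^4
        + (α / 2) * (v x t₁)^2 + (α / 2) * (n x t₁)^2))
      = (∫ x : ℝ, (‖u x t₂‖^2 + ‖ρ x t₂‖^2 + ‖deriv (fun y => u y t₂) x‖^2
        + α * ‖u x t₂‖^2 * v x t₂ + (β / 2) * ‖u x t₂‖^4
        + (α / 2) * (v x t₂)^2 + (α / 2) * (n x t₂)^2)) := by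
  intro t₁ ht₁ t₂ ht₂
  have hkey : ∀ t₀ ∈ Set.Ioo a b,
      HasDerivAt (fun τ => ∫ x : ℝ, (‖u x τ‖^2 + ‖ρ x τ‖^2 + ‖deriv (fun y => u y τ) x‖^2
        + α * ‖u x τ‖^2 * v x τ + (β / 2) * ‖u x τ‖^4
        + (α / 2) * (v x τ)^2 + (α / 2) * (n x τ)^2)) 0 t₀ := by
    intro t₀ ht₀
    obtain ⟨ε, hε, hKsub⟩ : ∃ ε : ℝ, 0 < ε ∧ Set.Icc (t₀ - ε) (t₀ + ε) ⊆ Set.Ioo a b := by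
      refine ⟨min (t₀ - a) (b - t₀) / 2, ?_, ?_⟩
      · have h1 : 0 < t₀ - a := by linarith [ht₀.1]
        have h2 : 0 < b - t₀ := by linarith [ht₀.2]
        have := lt_min h1 h2
        linarith
      · intro s hs
        simp only [Set.mem_Icc] at hs
        have hm1 := min_le_left (t₀ - a) (b - t₀)
        have hm2 := min_le_right (t₀ - a) (b - t₀)
        have hp1 : a < t₀ := ht₀.1
        have hp2 : t₀ < b := ht₀.2
        have hmin : 0 < min (t₀ - a) (b - t₀) := lt_min (by linarith) (by linarith)
        exact ⟨by linarith [hs.1], by linarith [hs.2]⟩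
    set K := Set.Icc (t₀ - ε) (t₀ + ε) with hK
    have hKc : IsCompact K := isCompact_Icc
    have ht₀K : t₀ ∈ K := by
      rw [hK, Set.mem_Icc]; constructor <;> linarith
    have hballK : Metric.ball t₀ ε ⊆ K := by
      intro s hs
      rw [Real.ball_eq_Ioo] at hs
      exact Set.Ioo_subset_Icc_self hs
    have hballIoo : ∀ s ∈ Metric.ball t₀ ε, s ∈ Set.Ioo a b := fun s hs => hKsub (hballK hs)
    -- BD base facts
    have bdu0 : BD K u := by
      have h := bd_of_unifSchwartz hus hKc hKsub 0
      have e : (fun x t => iteratedDeriv 0 (fun y => u y t) x) = u := by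
        funext x t; rw [iteratedDeriv_zero]
      rwa [e] at h
    have bdu1 : BD K (fun x t => deriv (fun y => u y t) x) := by
      have h := bd_of_unifSchwartz hus hKc hKsub 1
      have e : (fun x t => iteratedDeriv 1 (fun y => u y t) x)
          = (fun x t => deriv (fun y => u y t) x) := by
        funext x t; rw [iteratedDeriv_one]
      rwa [e] at h
    have bdu2 : BD K (fun x t => deriv (fun y => deriv (fun z => u z t) y) x) := by
      have h := bd_of_unifSchwartz hus hKc hKsub 2
      have e : (fun x t => iteratedDeriv 2 (fun y => u y t) x)
          = (fun x t => deriv (fun y => deriv (fun z => u z t) y) x) := by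
        funext x t
        rw [show (2:ℕ) = 1 + 1 from rfl, iteratedDeriv_succ, iteratedDeriv_one]
      rwa [e] at h
    have bdρ0 : BD K ρ := by
      have h := bd_of_unifSchwartz hρs hKc hKsub 0
      have e : (fun x t => iteratedDeriv 0 (fun y => ρ y t) x) = ρ := by
        funext x t; rw [iteratedDeriv_zero]
      rwa [e] at h
    have bdρ1 : BD K (fun x t => deriv (fun y => ρ y t) x) := by
      have h := bd_of_unifSchwartz hρs hKc hKsub 1
      have e : (fun x t => iteratedDeriv 1 (fun y => ρ y t) x)
          = (fun x t => deriv (fun y => ρ y t) x) := by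
        funext x t; rw [iteratedDeriv_one]
      rwa [e] at h
    have bdv0 : BD K v := by
      have h := bd_of_unifSchwartz hvs hKc hKsub 0
      have e : (fun x t => iteratedDeriv 0 (fun y => v y t) x) = v := by
        funext x t; rw [iteratedDeriv_zero]
      rwa [e] at h
    have bdv1 : BD K (fun x t => deriv (fun y => v y t) x) := by
      have h := bd_of_unifSchwartz hvs hKc hKsub 1
      have e : (fun x t => iteratedDeriv 1 (fun y => v y t) x)
          = (fun x t => deriv (fun y => v y t) x) := by
        funext x t; rw [iteratedDeriv_one]
      rwa [e] at h
    have bdn0 : BD K n := by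
      have h := bd_of_unifSchwartz hns hKc hKsub 0
      have e : (fun x t => iteratedDeriv 0 (fun y => n y t) x) = n := by
        funext x t; rw [iteratedDeriv_zero]
      rwa [e] at h
    have bdn1 : BD K (fun x t => deriv (fun y => n y t) x) := by
      have h := bd_of_unifSchwartz hns hKc hKsub 1
      have e : (fun x t => iteratedDeriv 1 (fun y => n y t) x)
          = (fun x t => deriv (fun y => n y t) x) := by
        funext x t; rw [iteratedDeriv_one]
      rwa [e] at h
    -- regularity of x-slices
    have hcdu : ∀ τ ∈ Set.Ioo a b, Differentiable ℝ (fun y => u y τ)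
        ∧ Differentiable ℝ (deriv (fun y => u y τ))
        ∧ Continuous (fun y => u y τ)
        ∧ Continuous (deriv (fun y => u y τ))
        ∧ Continuous (deriv (deriv (fun y => u y τ))) := by
      intro τ hτ
      have h0 := slice_x hu hτ
      have h1 := contDiff_infty_iff_deriv.mp h0
      have h2 := contDiff_infty_iff_deriv.mp h1.2
      exact ⟨h1.1, h2.1, h0.continuous, h1.2.continuous, h2.2.continuous⟩
    have hcdρ : ∀ τ ∈ Set.Ioo a b, Differentiable ℝ (fun y => ρ y τ)
        ∧ Continuous (fun y => ρ y τ) ∧ Continuous (deriv (fun y => ρ y τ)) := by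
      intro τ hτ
      have h0 := slice_x hρ hτ
      have h1 := contDiff_infty_iff_deriv.mp h0
      exact ⟨h1.1, h0.continuous, h1.2.continuous⟩
    have hcdv : ∀ τ ∈ Set.Ioo a b, Differentiable ℝ (fun y => v y τ)
        ∧ Continuous (fun y => v y τ) ∧ Continuous (deriv (fun y => v y τ)) := by
      intro τ hτ
      have h0 := slice_x hv hτ
      have h1 := contDiff_infty_iff_deriv.mp h0
      exact ⟨h1.1, h0.continuous, h1.2.continuous⟩
    have hcdn : ∀ τ ∈ Set.Ioo a b, Differentiable ℝ (fun y => n y τ)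
        ∧ Continuous (fun y => n y τ) ∧ Continuous (deriv (fun y => n y τ)) := by
      intro τ hτ
      have h0 := slice_x hn hτ
      have h1 := contDiff_infty_iff_deriv.mp h0
      exact ⟨h1.1, h0.continuous, h1.2.continuous⟩
    -- pointwise time derivative of the energy density
    have hdF : ∀ x : ℝ, ∀ t ∈ Set.Ioo a b,
        HasDerivAt (fun s => ‖u x s‖^2 + ‖ρ x s‖^2 + ‖deriv (fun y => u y s) x‖^2
          + α * ‖u x s‖^2 * v x s + (β / 2) * ‖u x s‖^4
          + (α / 2) * (v x s)^2 + (α / 2) * (n x s)^2)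
        (-2*(cdot (deriv (fun y => ρ y t) x) (deriv (fun y => u y t) x)
            + cdot (ρ x t) (deriv (fun y => deriv (fun z => u z t) y) x))
          + α*((2*cdot (u x t) (deriv (fun y => u y t) x) + deriv (fun y => v y t) x) * n x t
            + (cdot (u x t) (u x t) + v x t) * deriv (fun y => n y t) x)) t := by
      intro x t ht
      have hxu : HasDerivAt (fun y => u y t) (deriv (fun y => u y t) x) x :=
        ((hcdu t ht).1 x).hasDerivAt
      have ht_u : HasDerivAt (fun s => u x s) (-ρ x t) t := by
        have h := hasDerivAt_t hu x ht
        rwa [heq1 x t ht] at h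
      have ht_ρ : HasDerivAt (fun s => ρ x s)
          (-(deriv (fun y => deriv (fun z => u z t) y) x) + u x t
            + (α : ℂ) * ((v x t : ℝ) : ℂ) * u x t
            + (β : ℂ) * ((‖u x t‖^2 : ℝ) : ℂ) * u x t) t := by
        have h := hasDerivAt_t hρ x ht
        rwa [heq2 x t ht] at h
      have ht_ux : HasDerivAt (fun s => deriv (fun y => u y s) x)
          (-(deriv (fun y => ρ y t) x)) t := by
        have h := clairaut hu heq1 x ht
        rwa [deriv.fun_neg] at h
      have ht_v : HasDerivAt (fun s => v x s) (deriv (fun y => n y t) x) t := by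
        have h := hasDerivAt_t hv x ht
        rwa [heq3 x t ht] at h
      have ht_n : HasDerivAt (fun s => n x s)
          (deriv (fun y => v y t) x + 2 * cdot (u x t) (deriv (fun y => u y t) x)) t := by
        have h := hasDerivAt_t hn x ht
        have h4 := heq4 x t ht
        have hnx : deriv (fun y => ‖u y t‖^2) x
            = 2 * cdot (u x t) (deriv (fun y => u y t) x) := (hd_normsq hxu).deriv
        have heqn : deriv (fun s => n x s) t
            = deriv (fun y => v y t) x + 2 * cdot (u x t) (deriv (fun y => u y t) x) := by
          rw [← hnx]; linarith
        rwa [heqn] at h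
      have h := hd_F_general α β ht_u ht_ρ ht_ux ht_v ht_n
      have hval := value_identity α β (u x t) (ρ x t) (deriv (fun y => u y t) x)
        (deriv (fun y => deriv (fun z => u z t) y) x) (deriv (fun y => ρ y t) x)
        (v x t) (n x t) (deriv (fun y => v y t) x) (deriv (fun y => n y t) x)
      rwa [hval] at h
    -- continuity of the relevant x-slices
    have hcontF : ∀ τ ∈ Set.Ioo a b, Continuous (fun x : ℝ => ‖u x τ‖^2 + ‖ρ x τ‖^2
        + ‖deriv (fun y => u y τ) x‖^2 + α * ‖u x τ‖^2 * v x τ + (β / 2) * ‖u x τ‖^4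
        + (α / 2) * (v x τ)^2 + (α / 2) * (n x τ)^2) := by
      intro τ hτ
      obtain ⟨-, -, hcu, hcux, -⟩ := hcdu τ hτ
      obtain ⟨-, hcρ, -⟩ := hcdρ τ hτ
      obtain ⟨-, hcv, -⟩ := hcdv τ hτ
      obtain ⟨-, hcn, -⟩ := hcdn τ hτ
      exact (((((((hcu.norm.pow 2).add (hcρ.norm.pow 2)).add (hcux.norm.pow 2)).add
        ((continuous_const.mul (hcu.norm.pow 2)).mul hcv)).add
        (continuous_const.mul (hcu.norm.pow 4))).add
        (continuous_const.mul (hcv.pow 2))).add (continuous_const.mul (hcn.pow 2)))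
    have hcontg : ∀ τ ∈ Set.Ioo a b, Continuous (fun x : ℝ =>
        -2*(cdot (deriv (fun y => ρ y τ) x) (deriv (fun y => u y τ) x)
            + cdot (ρ x τ) (deriv (fun y => deriv (fun z => u z τ) y) x))
          + α*((2*cdot (u x τ) (deriv (fun y => u y τ) x) + deriv (fun y => v y τ) x) * n x τ
            + (cdot (u x τ) (u x τ) + v x τ) * deriv (fun y => n y τ) x)) := by
      intro τ hτ
      obtain ⟨-, -, hcu, hcux, hcuxx⟩ := hcdu τ hτ
      obtain ⟨-, hcρ, hcρx⟩ := hcdρ τ hτ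
      obtain ⟨-, hcv, hcvx⟩ := hcdv τ hτ
      obtain ⟨-, hcn, hcnx⟩ := hcdn τ hτ
      exact (continuous_const.mul ((cont_cdot hcρx hcux).add (cont_cdot hcρ hcuxx))).add
        (continuous_const.mul ((((continuous_const.mul (cont_cdot hcu hcux)).add hcvx).mul
          hcn).add (((cont_cdot hcu hcu).add hcv).mul hcnx)))
    -- BD of the energy density
    have bdF : BD K (fun x t => ‖u x t‖^2 + ‖ρ x t‖^2 + ‖deriv (fun y => u y t) x‖^2
        + α * ‖u x t‖^2 * v x t + (β / 2) * ‖u x t‖^4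
        + (α / 2) * (v x t)^2 + (α / 2) * (n x t)^2) := by
      have h : BD K (fun x t => cdot (u x t) (u x t) + cdot (ρ x t) (ρ x t)
          + cdot (deriv (fun y => u y t) x) (deriv (fun y => u y t) x)
          + (α * cdot (u x t) (u x t)) * v x t
          + (β / 2) * (cdot (u x t) (u x t) * cdot (u x t) (u x t))
          + (α / 2) * (v x t * v x t) + (α / 2) * (n x t * n x t)) :=
        ((((((bdu0.dotc bdu0).add (bdρ0.dotc bdρ0)).add (bdu1.dotc bdu1)).add
          (((bdu0.dotc bdu0).const_mul α).mul bdv0)).add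
          (((bdu0.dotc bdu0).mul (bdu0.dotc bdu0)).const_mul (β/2))).add
          ((bdv0.mul bdv0).const_mul (α/2))).add ((bdn0.mul bdn0).const_mul (α/2))
      have e : (fun (x t : ℝ) => ‖u x t‖^2 + ‖ρ x t‖^2 + ‖deriv (fun y => u y t) x‖^2
          + α * ‖u x t‖^2 * v x t + (β / 2) * ‖u x t‖^4
          + (α / 2) * (v x t)^2 + (α / 2) * (n x t)^2)
          = (fun x t => cdot (u x t) (u x t) + cdot (ρ x t) (ρ x t)
          + cdot (deriv (fun y => u y t) x) (deriv (fun y => u y t) x)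
          + (α * cdot (u x t) (u x t)) * v x t
          + (β / 2) * (cdot (u x t) (u x t) * cdot (u x t) (u x t))
          + (α / 2) * (v x t * v x t) + (α / 2) * (n x t * n x t)) := by
        funext x t
        rw [show ‖u x t‖^4 = (‖u x t‖^2)^2 by ring, norm_sq_eq (u x t), norm_sq_eq (ρ x t),
          norm_sq_eq (deriv (fun y => u y t) x)]
        simp only [cdot]
        ring
      rwa [e]
    -- BD of the time derivative
    have bdg : BD K (fun x t =>
        -2*(cdot (deriv (fun y => ρ y t) x) (deriv (fun y => u y t) x)
            + cdot (ρ x t) (deriv (fun y => deriv (fun z => u z t) y) x))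
          + α*((2*cdot (u x t) (deriv (fun y => u y t) x) + deriv (fun y => v y t) x) * n x t
            + (cdot (u x t) (u x t) + v x t) * deriv (fun y => n y t) x)) := by
      exact (((bdρ1.dotc bdu1).add (bdρ0.dotc bdu2)).const_mul (-2)).add
        ((((((bdu0.dotc bdu1).const_mul 2).add bdv1).mul bdn0).add
          (((bdu0.dotc bdu0).add bdv0).mul bdn1)).const_mul α)
    -- BD of the flux
    have bdW : BD K (fun x t => -2 * cdot (ρ x t) (deriv (fun z => u z t) x)
        + α * (cdot (u x t) (u x t) + v x t) * n x t) := by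
      exact ((bdρ0.dotc bdu1).const_mul (-2)).add
        ((((bdu0.dotc bdu0).add bdv0).const_mul α).mul bdn0)
    -- FTC in x : integral of the time-derivative vanishes at t₀
    have hdW : ∀ x : ℝ, HasDerivAt (fun y => -2 * cdot (ρ y t₀) (deriv (fun z => u z t₀) y)
        + α * (cdot (u y t₀) (u y t₀) + v y t₀) * n y t₀)
        (-2*(cdot (deriv (fun y => ρ y t₀) x) (deriv (fun y => u y t₀) x)
            + cdot (ρ x t₀) (deriv (fun y => deriv (fun z => u z t₀) y) x))
          + α*((2*cdot (u x t₀) (deriv (fun y => u y t₀) x) + deriv (fun y => v y t₀) x) * n x t₀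
            + (cdot (u x t₀) (u x t₀) + v x t₀) * deriv (fun y => n y t₀) x)) x := by
      intro x
      exact hd_W_general α (((hcdρ t₀ ht₀).1 x).hasDerivAt) (((hcdu t₀ ht₀).2.1 x).hasDerivAt)
        (((hcdu t₀ ht₀).1 x).hasDerivAt) (((hcdv t₀ ht₀).1 x).hasDerivAt)
        (((hcdn t₀ ht₀).1 x).hasDerivAt)
    have hzero : (∫ x : ℝ,
        (-2*(cdot (deriv (fun y => ρ y t₀) x) (deriv (fun y => u y t₀) x)
            + cdot (ρ x t₀) (deriv (fun y => deriv (fun z => u z t₀) y) x))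
          + α*((2*cdot (u x t₀) (deriv (fun y => u y t₀) x) + deriv (fun y => v y t₀) x) * n x t₀
            + (cdot (u x t₀) (u x t₀) + v x t₀) * deriv (fun y => n y t₀) x))) = 0 :=
      integral_eq_zero_of_antideriv hdW
        (bdg.integrable_slice ht₀K (hcontg t₀ ht₀))
        (bdW.tendsto_atTop ht₀K) (bdW.tendsto_atBot ht₀K)
    -- differentiate under the integral
    obtain ⟨Cg, hCg0, hCgb⟩ := bdg.bound
    have hmeasF : ∀ᶠ t in nhds t₀, AEStronglyMeasurable
        (fun x : ℝ => ‖u x t‖^2 + ‖ρ x t‖^2 + ‖deriv (fun y => u y t) x‖^2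
          + α * ‖u x t‖^2 * v x t + (β / 2) * ‖u x t‖^4
          + (α / 2) * (v x t)^2 + (α / 2) * (n x t)^2) (volume : Measure ℝ) := by
      filter_upwards [Ioo_mem_nhds ht₀.1 ht₀.2] with τ hτ
      exact (hcontF τ hτ).aestronglyMeasurable
    have hdom := hasDerivAt_integral_of_dominated_loc_of_deriv_le (μ := (volume : Measure ℝ))
      (F := fun t x => ‖u x t‖^2 + ‖ρ x t‖^2 + ‖deriv (fun y => u y t) x‖^2
          + α * ‖u x t‖^2 * v x t + (β / 2) * ‖u x t‖^4
          + (α / 2) * (v x t)^2 + (α / 2) * (n x t)^2)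
      (F' := fun t x =>
        -2*(cdot (deriv (fun y => ρ y t) x) (deriv (fun y => u y t) x)
            + cdot (ρ x t) (deriv (fun y => deriv (fun z => u z t) y) x))
          + α*((2*cdot (u x t) (deriv (fun y => u y t) x) + deriv (fun y => v y t) x) * n x t
            + (cdot (u x t) (u x t) + v x t) * deriv (fun y => n y t) x))
      (x₀ := t₀) (bound := fun x : ℝ => Cg * (1 + x^2)⁻¹) (Metric.ball_mem_nhds t₀ hε) hmeasF
      (bdF.integrable_slice ht₀K (hcontF t₀ ht₀))
      ((hcontg t₀ ht₀).aestronglyMeasurable)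
      (Filter.Eventually.of_forall fun x t htb => by
        rw [Real.norm_eq_abs]
        exact hCgb t (hballK htb) x)
      (integrable_inv_one_add_sq.const_mul Cg)
      (Filter.Eventually.of_forall fun x t htb => hdF x t (hballIoo t htb))
    have h2 := hdom.2
    rw [hzero] at h2
    exact h2
  have hsub : Set.uIcc t₁ t₂ ⊆ Set.Ioo a b := Set.ordConnected_Ioo.uIcc_subset ht₁ ht₂
  have h0 : IntervalIntegrable (fun _ : ℝ => (0:ℝ)) volume t₁ t₂ := intervalIntegrable_const
  have hfin := intervalIntegral.integral_eq_sub_of_hasDerivAt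
    (f := fun τ => ∫ x : ℝ, (‖u x τ‖^2 + ‖ρ x τ‖^2 + ‖deriv (fun y => u y τ) x‖^2
        + α * ‖u x τ‖^2 * v x τ + (β / 2) * ‖u x τ‖^4
        + (α / 2) * (v x τ)^2 + (α / 2) * (n x τ)^2))
    (fun s hs => hkey s (hsub hs)) h0
  simp only [intervalIntegral.integral_zero] at hfin
  linarith [hfin]
end

section
/- Let a < b be real. Suppose u, ρ : ℝ × (a,b) → ℂ and v, n : ℝ × (a,b) → ℝ are C^∞ jointly in (x,t), for every t ∈ (a,b) the maps x ↦ u(x,t), ρ(x,t), v(x,t), n(x,t) are Schwartz functions of x (uniformly on compact subsets of (a,b)), and (u, ρ, v, n) satisfies system (S) at every point. Then both Q₁(t) = 2·Re ∫_ℝ ∂_x u(x,t)·conj(ρ(x,t)) dx − α·∫_ℝ n(x,t)·v(x,t) dx and Q₂(t) = 2·Im ∫_ℝ conj(u(x,t))·ρ(x,t) dx are constant on (a,b). -/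
open MeasureTheory Filter

set_option linter.unusedSectionVars false

namespace KGZ
open Set

variable {E : Type*} [NormedAddCommGroup E] [NormedSpace ℝ E]
variable {a b : ℝ} {f : ℝ → ℝ → E}

lemma one_le_inf : ((⊤ : ℕ∞) : WithTop ℕ∞) ≠ 0 := by simp

lemma strip_open : IsOpen ((univ : Set ℝ) ×ˢ Ioo a b) := isOpen_univ.prod isOpen_Ioo
lemma mem_strip {x t : ℝ} (ht : t ∈ Ioo a b) : (x, t) ∈ (univ : Set ℝ) ×ˢ Ioo a b := ⟨trivial, ht⟩

section slices

variable (hf : ContDiffOn ℝ (⊤ : ℕ∞) (fun p : ℝ × ℝ => f p.1 p.2) (univ ×ˢ Ioo a b))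
include hf

lemma contDiffAt_joint {x t : ℝ} (ht : t ∈ Ioo a b) :
    ContDiffAt ℝ (⊤ : ℕ∞) (fun p : ℝ × ℝ => f p.1 p.2) (x, t) :=
  hf.contDiffAt (strip_open.mem_nhds (mem_strip ht))

lemma diffAt_joint {x t : ℝ} (ht : t ∈ Ioo a b) :
    DifferentiableAt ℝ (fun p : ℝ × ℝ => f p.1 p.2) (x, t) :=
  (contDiffAt_joint hf (x := x) ht).differentiableAt one_le_inf

lemma contDiffOn_fderiv_apply (w : ℝ × ℝ) :
    ContDiffOn ℝ (⊤ : ℕ∞) (fun p : ℝ × ℝ => fderiv ℝ (fun q : ℝ × ℝ => f q.1 q.2) p w)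
      (univ ×ˢ Ioo a b) := by
  have h := (contDiffOn_infty_iff_fderiv_of_isOpen (strip_open (a := a) (b := b))).1 hf
  exact h.2.clm_apply contDiffOn_const

lemma contDiff_slice_x {t : ℝ} (ht : t ∈ Ioo a b) :
    ContDiff ℝ (⊤ : ℕ∞) (fun y => f y t) := by
  rw [← contDiffOn_univ]
  exact hf.comp ((contDiff_id.prodMk contDiff_const).contDiffOn) (fun y _ => mem_strip ht)

lemma contDiff_slice_x_deriv {t : ℝ} (ht : t ∈ Ioo a b) :
    ContDiff ℝ (⊤ : ℕ∞) (deriv (fun y => f y t)) :=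
  (contDiff_infty_iff_deriv.1 (contDiff_slice_x hf ht)).2

lemma cont_slice0 {t : ℝ} (ht : t ∈ Ioo a b) : Continuous (fun y => f y t) :=
  (contDiff_slice_x hf ht).continuous

lemma cont_slice1 {t : ℝ} (ht : t ∈ Ioo a b) :
    Continuous (fun y => deriv (fun z => f z t) y) :=
  (contDiff_slice_x_deriv hf ht).continuous

lemma cont_slice2 {t : ℝ} (ht : t ∈ Ioo a b) :
    Continuous (fun y => deriv (fun w => deriv (fun z => f z t) w) y) :=
  (contDiff_infty_iff_deriv.1 (contDiff_slice_x_deriv hf ht)).2.continuous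

omit hf

lemma hasDerivAt_slice_x {x t : ℝ}
    (hd : DifferentiableAt ℝ (fun p : ℝ × ℝ => f p.1 p.2) (x, t)) :
    HasDerivAt (fun y => f y t)
      (fderiv ℝ (fun p : ℝ × ℝ => f p.1 p.2) (x, t) (1, 0)) x := by
  have h1 : HasDerivAt (fun y : ℝ => ((y, t) : ℝ × ℝ)) ((1 : ℝ), (0 : ℝ)) x :=
    (hasDerivAt_id x).prodMk (hasDerivAt_const x t)
  exact hd.hasFDerivAt.comp_hasDerivAt x h1

lemma hasDerivAt_slice_t {x t : ℝ}
    (hd : DifferentiableAt ℝ (fun p : ℝ × ℝ => f p.1 p.2) (x, t)) :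
    HasDerivAt (fun s => f x s)
      (fderiv ℝ (fun p : ℝ × ℝ => f p.1 p.2) (x, t) (0, 1)) t := by
  have h1 : HasDerivAt (fun s : ℝ => ((x, s) : ℝ × ℝ)) ((0 : ℝ), (1 : ℝ)) t :=
    (hasDerivAt_const t x).prodMk (hasDerivAt_id t)
  exact hd.hasFDerivAt.comp_hasDerivAt t h1

include hf

lemma hasDerivAt_t {x t : ℝ} (ht : t ∈ Ioo a b) :
    HasDerivAt (fun s => f x s) (deriv (fun s => f x s) t) t := by
  have h := hasDerivAt_slice_t (f := f) (x := x) (diffAt_joint hf (x := x) ht)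
  rwa [h.deriv]

lemma hasDerivAt_x {x t : ℝ} (ht : t ∈ Ioo a b) :
    HasDerivAt (fun y => f y t) (deriv (fun y => f y t) x) x := by
  have h := hasDerivAt_slice_x (f := f) (x := x) (diffAt_joint hf (x := x) ht)
  rwa [h.deriv]

lemma hasDerivAt_x1 {x t : ℝ} (ht : t ∈ Ioo a b) :
    HasDerivAt (fun y => deriv (fun z => f z t) y)
      (deriv (fun y => deriv (fun z => f z t) y) x) x :=
  (((contDiff_slice_x_deriv hf ht).differentiable one_le_inf) x).hasDerivAt

/-- Clairaut -/
lemma swap {x t : ℝ} (ht : t ∈ Ioo a b) :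
    HasDerivAt (fun s => deriv (fun y => f y s) x)
      (deriv (fun y => deriv (fun s => f y s) t) x) t := by
  have hdF : ∀ y : ℝ, ∀ s ∈ Ioo a b, DifferentiableAt ℝ (fun p : ℝ × ℝ => f p.1 p.2) (y, s) :=
    fun y s hs => diffAt_joint hf hs
  have hG1smooth := contDiffOn_fderiv_apply hf ((1 : ℝ), (0 : ℝ))
  have hG2smooth := contDiffOn_fderiv_apply hf ((0 : ℝ), (1 : ℝ))
  have hdG1 : DifferentiableAt ℝ
      (fun p : ℝ × ℝ => fderiv ℝ (fun q : ℝ × ℝ => f q.1 q.2) p (1, 0)) (x, t) :=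
    (hG1smooth.contDiffAt (strip_open.mem_nhds (mem_strip ht))).differentiableAt one_le_inf
  have hdG2 : DifferentiableAt ℝ
      (fun p : ℝ × ℝ => fderiv ℝ (fun q : ℝ × ℝ => f q.1 q.2) p (0, 1)) (x, t) :=
    (hG2smooth.contDiffAt (strip_open.mem_nhds (mem_strip ht))).differentiableAt one_le_inf
  have hdfder : DifferentiableAt ℝ (fderiv ℝ (fun q : ℝ × ℝ => f q.1 q.2)) (x, t) := by
    have h := (contDiffOn_infty_iff_fderiv_of_isOpen (strip_open (a := a) (b := b))).1 hf
    exact (h.2.contDiffAt (strip_open.mem_nhds (mem_strip ht))).differentiableAt one_le_inf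
  have hsymm : fderiv ℝ (fderiv ℝ (fun q : ℝ × ℝ => f q.1 q.2)) (x, t) ((0:ℝ), (1:ℝ)) (1, 0)
      = fderiv ℝ (fderiv ℝ (fun q : ℝ × ℝ => f q.1 q.2)) (x, t) (1, 0) (0, 1) := by
    have h := (contDiffAt_joint hf (x := x) ht).isSymmSndFDerivAt
      (by { rw [minSmoothness_of_isRCLikeNormedField];
            exact WithTop.coe_le_coe.2 le_top })
    exact (h _ _).symm
  have key : ∀ w w' : ℝ × ℝ,
      fderiv ℝ (fun p : ℝ × ℝ => fderiv ℝ (fun q : ℝ × ℝ => f q.1 q.2) p w) (x, t) w'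
        = fderiv ℝ (fderiv ℝ (fun q : ℝ × ℝ => f q.1 q.2)) (x, t) w' w := by
    intro w w'
    have hL := ((ContinuousLinearMap.apply ℝ E w).hasFDerivAt.comp (x, t)
      hdfder.hasFDerivAt).fderiv
    calc fderiv ℝ (fun p : ℝ × ℝ => fderiv ℝ (fun q : ℝ × ℝ => f q.1 q.2) p w) (x, t) w'
        = ((ContinuousLinearMap.apply ℝ E w).comp
            (fderiv ℝ (fderiv ℝ (fun q : ℝ × ℝ => f q.1 q.2)) (x, t))) w' := by rw [← hL]; rfl
      _ = fderiv ℝ (fderiv ℝ (fun q : ℝ × ℝ => f q.1 q.2)) (x, t) w' w := rfl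
  have hev : (fun s => deriv (fun y => f y s) x)
      =ᶠ[nhds t] (fun s => fderiv ℝ (fun q : ℝ × ℝ => f q.1 q.2) (x, s) (1, 0)) := by
    filter_upwards [isOpen_Ioo.mem_nhds ht] with s hs
    exact (hasDerivAt_slice_x (f := f) (hdF x s hs)).deriv
  have h2 : HasDerivAt (fun s => fderiv ℝ (fun q : ℝ × ℝ => f q.1 q.2) (x, s) (1, 0))
      (fderiv ℝ (fun p : ℝ × ℝ => fderiv ℝ (fun q : ℝ × ℝ => f q.1 q.2) p (1, 0)) (x, t) (0, 1))
      t :=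
    hasDerivAt_slice_t (f := fun y s => fderiv ℝ (fun q : ℝ × ℝ => f q.1 q.2) (y, s) (1, 0))
      (by simpa using hdG1)
  have hval : deriv (fun y => deriv (fun s => f y s) t) x
      = fderiv ℝ (fun p : ℝ × ℝ => fderiv ℝ (fun q : ℝ × ℝ => f q.1 q.2) p (1, 0)) (x, t)
          (0, 1) := by
    have hcongr : (fun y => deriv (fun s => f y s) t)
        = fun y => fderiv ℝ (fun q : ℝ × ℝ => f q.1 q.2) (y, t) (0, 1) := by
      funext y
      exact (hasDerivAt_slice_t (f := f) (hdF y t ht)).deriv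
    rw [hcongr]
    have h4 : HasDerivAt (fun y => fderiv ℝ (fun q : ℝ × ℝ => f q.1 q.2) (y, t) (0, 1))
        (fderiv ℝ (fun p : ℝ × ℝ => fderiv ℝ (fun q : ℝ × ℝ => f q.1 q.2) p (0, 1)) (x, t)
          (1, 0)) x :=
      hasDerivAt_slice_x (f := fun y s => fderiv ℝ (fun q : ℝ × ℝ => f q.1 q.2) (y, s) (0, 1))
        (by simpa using hdG2)
    rw [h4.deriv, key, key, hsymm]
  rw [hval]
  exact h2.congr_of_eventuallyEq hev

end slices

/-! ### decay algebra -/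

def DecOn (K : Set ℝ) (g : ℝ → ℝ → E) (C : ℝ) : Prop :=
  ∀ t ∈ K, ∀ x : ℝ, (1 + x ^ 2) * ‖g x t‖ ≤ C

namespace DecOn

variable {K : Set ℝ} {C D : ℝ}

lemma congr {g g' : ℝ → ℝ → E} (h : DecOn K g C) (he : ∀ t ∈ K, ∀ x, g' x t = g x t) :
    DecOn K g' C := by
  intro t ht x; rw [he t ht x]; exact h t ht x

lemma bounded {g : ℝ → ℝ → E} (h : DecOn K g C) : ∀ t ∈ K, ∀ x, ‖g x t‖ ≤ C := by
  intro t ht x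
  have h1 := h t ht x
  nlinarith [norm_nonneg (g x t), sq_nonneg x]

lemma norm_le {g : ℝ → ℝ → E} (h : DecOn K g C) :
    ∀ t ∈ K, ∀ x, ‖g x t‖ ≤ C * (1 + x ^ 2)⁻¹ := by
  intro t ht x
  rw [← div_eq_mul_inv, le_div_iff₀ (by positivity)]
  linarith [h t ht x]

lemma nonneg_aux {g : ℝ → ℝ → E} (h : DecOn K g C) {t : ℝ} (ht : t ∈ K) : 0 ≤ C :=
  le_trans (by positivity) (h t ht 0)

lemma add {g h : ℝ → ℝ → E} (hg : DecOn K g C) (hh : DecOn K h D) :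
    DecOn K (fun x t => g x t + h x t) (C + D) := by
  intro t ht x
  calc (1 + x ^ 2) * ‖g x t + h x t‖ ≤ (1 + x ^ 2) * (‖g x t‖ + ‖h x t‖) := by
        have := norm_add_le (g x t) (h x t); nlinarith [sq_nonneg x]
    _ ≤ C + D := by
        have := hg t ht x; have := hh t ht x
        linarith [mul_add (1 + x ^ 2) ‖g x t‖ ‖h x t‖]

lemma neg {g : ℝ → ℝ → E} (hg : DecOn K g C) : DecOn K (fun x t => -g x t) C := by
  intro t ht x; simpa using hg t ht x

lemma sub {g h : ℝ → ℝ → E} (hg : DecOn K g C) (hh : DecOn K h D) :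
    DecOn K (fun x t => g x t - h x t) (C + D) := by
  simpa [sub_eq_add_neg] using hg.add hh.neg

lemma mul {A : Type*} [NormedRing A] [NormedSpace ℝ A] {g h : ℝ → ℝ → A}
    (hg : DecOn K g C) (hh : DecOn K h D) :
    DecOn K (fun x t => g x t * h x t) (C * D) := by
  intro t ht x
  have h1 := hg t ht x
  have h2 := hh.bounded t ht x
  have h3 : (1 + x ^ 2) * ‖g x t * h x t‖ ≤ ((1 + x ^ 2) * ‖g x t‖) * ‖h x t‖ := by
    have := norm_mul_le (g x t) (h x t)
    nlinarith [sq_nonneg x, norm_nonneg (g x t), norm_nonneg (h x t)]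
  exact h3.trans (mul_le_mul h1 h2 (norm_nonneg _) (hg.nonneg_aux ht))

lemma const_mul {g : ℝ → ℝ → ℝ} (hg : DecOn K g C) (c : ℝ) :
    DecOn K (fun x t => c * g x t) (|c| * C) := by
  intro t ht x
  have h1 := hg t ht x
  calc (1 + x ^ 2) * ‖c * g x t‖ = |c| * ((1 + x ^ 2) * ‖g x t‖) := by
        rw [norm_mul]; simp [Real.norm_eq_abs]; ring
    _ ≤ |c| * C := mul_le_mul_of_nonneg_left h1 (abs_nonneg c)

lemma smul_complex {g : ℝ → ℝ → ℂ} (hg : DecOn K g C) (c : ℂ) :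
    DecOn K (fun x t => c * g x t) (‖c‖ * C) := by
  intro t ht x
  have h1 := hg t ht x
  calc (1 + x ^ 2) * ‖c * g x t‖ = ‖c‖ * ((1 + x ^ 2) * ‖g x t‖) := by rw [norm_mul]; ring
    _ ≤ ‖c‖ * C := mul_le_mul_of_nonneg_left h1 (norm_nonneg c)

lemma re {g : ℝ → ℝ → ℂ} (hg : DecOn K g C) : DecOn K (fun x t => (g x t).re) C := by
  intro t ht x
  refine le_trans ?_ (hg t ht x)
  have h2 : ‖(g x t).re‖ ≤ ‖g x t‖ := by
    simpa [Real.norm_eq_abs] using Complex.abs_re_le_norm (g x t)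
  nlinarith [sq_nonneg x, norm_nonneg (g x t)]

lemma im {g : ℝ → ℝ → ℂ} (hg : DecOn K g C) : DecOn K (fun x t => (g x t).im) C := by
  intro t ht x
  refine le_trans ?_ (hg t ht x)
  have h2 : ‖(g x t).im‖ ≤ ‖g x t‖ := by
    simpa [Real.norm_eq_abs] using Complex.abs_im_le_norm (g x t)
  nlinarith [sq_nonneg x, norm_nonneg (g x t)]

lemma conj {g : ℝ → ℝ → ℂ} (hg : DecOn K g C) :
    DecOn K (fun x t => (starRingEnd ℂ) (g x t)) C := by
  intro t ht x; simpa using hg t ht x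

lemma normSq {g : ℝ → ℝ → ℂ} (hg : DecOn K g C) :
    DecOn K (fun x t => (‖g x t‖ ^ 2 : ℝ)) (C * C) := by
  intro t ht x
  have h1 := hg t ht x
  have h2 := hg.bounded t ht x
  have h3 : ‖(‖g x t‖ ^ 2 : ℝ)‖ = ‖g x t‖ * ‖g x t‖ := by
    rw [Real.norm_eq_abs, abs_of_nonneg (by positivity)]; ring
  rw [h3]
  nlinarith [norm_nonneg (g x t), sq_nonneg x, hg.nonneg_aux ht]

lemma ofReal {g : ℝ → ℝ → ℝ} (hg : DecOn K g C) :
    DecOn K (fun x t => ((g x t : ℝ) : ℂ)) C := by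
  intro t ht x; simpa [Complex.norm_real] using hg t ht x

lemma integrable {g : ℝ → ℝ → E} (h : DecOn K g C) {t : ℝ} (ht : t ∈ K)
    (hc : Continuous fun x => g x t) : Integrable (fun x => g x t) := by
  refine Integrable.mono' ((integrable_inv_one_add_sq).const_mul C) hc.aestronglyMeasurable ?_
  exact Eventually.of_forall fun x => h.norm_le t ht x

set_option maxHeartbeats 1000000 in
lemma tendsto_atTop {g : ℝ → ℝ → E} (h : DecOn K g C) {t : ℝ} (ht : t ∈ K) :
    Tendsto (fun x => g x t) atTop (nhds 0) := by
  apply squeeze_zero_norm (h.norm_le t ht)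
  have h2 : Tendsto (fun x : ℝ => 1 + x ^ 2) atTop atTop :=
    tendsto_atTop_add_const_left _ 1 (tendsto_pow_atTop two_ne_zero)
  simpa using (h2.inv_tendsto_atTop).const_mul C

set_option maxHeartbeats 1000000 in
lemma tendsto_atBot {g : ℝ → ℝ → E} (h : DecOn K g C) {t : ℝ} (ht : t ∈ K) :
    Tendsto (fun x => g x t) atBot (nhds 0) := by
  apply squeeze_zero_norm (h.norm_le t ht)
  have h2 : Tendsto (fun x : ℝ => 1 + x ^ 2) atBot atTop := by
    have h3 : Tendsto (fun x : ℝ => x ^ 2) atBot atTop := by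
      have h4 : Tendsto (fun x : ℝ => -x) atBot atTop := tendsto_neg_atBot_atTop
      have := (tendsto_pow_atTop (n := 2) (two_ne_zero)).comp h4
      have heq : ((fun x : ℝ => x ^ 2) ∘ fun x : ℝ => -x) = fun x : ℝ => x ^ 2 := by
        funext x; simp [Function.comp, neg_sq]
      rwa [heq] at this
    exact tendsto_atTop_add_const_left _ 1 h3
  simpa using (h2.inv_tendsto_atTop).const_mul C

end DecOn


/-- existential version of `DecOn` -/
def EDecOn (K : Set ℝ) (g : ℝ → ℝ → E) : Prop := ∃ C, DecOn K g C

namespace EDecOn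

variable {K : Set ℝ}

lemma congr {g g' : ℝ → ℝ → E} (h : EDecOn K g) (he : ∀ t ∈ K, ∀ x, g' x t = g x t) :
    EDecOn K g' := let ⟨C, hC⟩ := h; ⟨C, hC.congr he⟩

lemma add {g h : ℝ → ℝ → E} (hg : EDecOn K g) (hh : EDecOn K h) :
    EDecOn K (fun x t => g x t + h x t) :=
  let ⟨C, hC⟩ := hg; let ⟨D, hD⟩ := hh; ⟨C + D, hC.add hD⟩

lemma neg {g : ℝ → ℝ → E} (hg : EDecOn K g) : EDecOn K (fun x t => -g x t) :=
  let ⟨C, hC⟩ := hg; ⟨C, hC.neg⟩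

lemma sub {g h : ℝ → ℝ → E} (hg : EDecOn K g) (hh : EDecOn K h) :
    EDecOn K (fun x t => g x t - h x t) :=
  let ⟨C, hC⟩ := hg; let ⟨D, hD⟩ := hh; ⟨C + D, hC.sub hD⟩

lemma mul {A : Type*} [NormedRing A] [NormedSpace ℝ A] {g h : ℝ → ℝ → A}
    (hg : EDecOn K g) (hh : EDecOn K h) : EDecOn K (fun x t => g x t * h x t) :=
  let ⟨C, hC⟩ := hg; let ⟨D, hD⟩ := hh; ⟨C * D, hC.mul hD⟩

lemma const_mul {g : ℝ → ℝ → ℝ} (hg : EDecOn K g) (c : ℝ) :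
    EDecOn K (fun x t => c * g x t) :=
  let ⟨C, hC⟩ := hg; ⟨|c| * C, hC.const_mul c⟩

lemma smul_complex {g : ℝ → ℝ → ℂ} (hg : EDecOn K g) (c : ℂ) :
    EDecOn K (fun x t => c * g x t) :=
  let ⟨C, hC⟩ := hg; ⟨‖c‖ * C, hC.smul_complex c⟩

lemma re {g : ℝ → ℝ → ℂ} (hg : EDecOn K g) : EDecOn K (fun x t => (g x t).re) :=
  let ⟨C, hC⟩ := hg; ⟨C, hC.re⟩

lemma im {g : ℝ → ℝ → ℂ} (hg : EDecOn K g) : EDecOn K (fun x t => (g x t).im) :=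
  let ⟨C, hC⟩ := hg; ⟨C, hC.im⟩

lemma conj {g : ℝ → ℝ → ℂ} (hg : EDecOn K g) :
    EDecOn K (fun x t => (starRingEnd ℂ) (g x t)) :=
  let ⟨C, hC⟩ := hg; ⟨C, hC.conj⟩

lemma normSq {g : ℝ → ℝ → ℂ} (hg : EDecOn K g) :
    EDecOn K (fun x t => (‖g x t‖ ^ 2 : ℝ)) :=
  let ⟨C, hC⟩ := hg; ⟨C * C, hC.normSq⟩

lemma ofReal {g : ℝ → ℝ → ℝ} (hg : EDecOn K g) :
    EDecOn K (fun x t => ((g x t : ℝ) : ℂ)) :=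
  let ⟨C, hC⟩ := hg; ⟨C, hC.ofReal⟩

lemma integrable {g : ℝ → ℝ → E} (h : EDecOn K g) {t : ℝ} (ht : t ∈ K)
    (hc : Continuous fun x => g x t) : Integrable (fun x => g x t) :=
  let ⟨C, hC⟩ := h; hC.integrable ht hc

lemma tendsto_atTop {g : ℝ → ℝ → E} (h : EDecOn K g) {t : ℝ} (ht : t ∈ K) :
    Tendsto (fun x => g x t) atTop (nhds 0) :=
  let ⟨C, hC⟩ := h; hC.tendsto_atTop ht

lemma tendsto_atBot {g : ℝ → ℝ → E} (h : EDecOn K g) {t : ℝ} (ht : t ∈ K) :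
    Tendsto (fun x => g x t) atBot (nhds 0) :=
  let ⟨C, hC⟩ := h; hC.tendsto_atBot ht

end EDecOn

lemma unifSchwartz_decOn {f : ℝ → ℝ → E} {a b : ℝ} (hfs : UnifSchwartz f a b)
    {K : Set ℝ} (hK : IsCompact K) (hKsub : K ⊆ Set.Ioo a b) (m : ℕ) :
    ∃ C, DecOn K (fun x t => iteratedDeriv m (fun y => f y t) x) C := by
  obtain ⟨C0, hC0⟩ := hfs K hK hKsub 0 m
  obtain ⟨C2, hC2⟩ := hfs K hK hKsub 2 m
  refine ⟨C0 + C2, fun t ht x => ?_⟩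
  have h0 := hC0 t ht x
  have h2 := hC2 t ht x
  simp only [pow_zero, one_mul] at h0
  rw [sq_abs] at h2
  nlinarith [norm_nonneg (iteratedDeriv m (fun y => f y t) x)]

lemma decOn0 {f : ℝ → ℝ → E} {a b : ℝ} (hfs : UnifSchwartz f a b)
    {K : Set ℝ} (hK : IsCompact K) (hKsub : K ⊆ Set.Ioo a b) :
    EDecOn K f := by
  obtain ⟨C, hC⟩ := unifSchwartz_decOn hfs hK hKsub 0
  exact ⟨C, hC.congr (fun t ht x => by simp [iteratedDeriv_zero])⟩

lemma decOn1 {f : ℝ → ℝ → E} {a b : ℝ} (hfs : UnifSchwartz f a b)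
    {K : Set ℝ} (hK : IsCompact K) (hKsub : K ⊆ Set.Ioo a b) :
    EDecOn K (fun x t => deriv (fun y => f y t) x) := by
  obtain ⟨C, hC⟩ := unifSchwartz_decOn hfs hK hKsub 1
  exact ⟨C, hC.congr (fun t ht x => by rw [iteratedDeriv_one])⟩

lemma decOn2 {f : ℝ → ℝ → E} {a b : ℝ} (hfs : UnifSchwartz f a b)
    {K : Set ℝ} (hK : IsCompact K) (hKsub : K ⊆ Set.Ioo a b) :
    EDecOn K (fun x t => deriv (fun y => deriv (fun z => f z t) y) x) := by
  obtain ⟨C, hC⟩ := unifSchwartz_decOn hfs hK hKsub 2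
  refine ⟨C, hC.congr (fun t ht x => ?_)⟩
  rw [show (2 : ℕ) = 1 + 1 from rfl, iteratedDeriv_succ, iteratedDeriv_one]

/-! ### complex-valued 1d calculus helpers -/

lemma derivConj {g : ℝ → ℂ} {g' : ℂ} {x : ℝ} (h : HasDerivAt g g' x) :
    HasDerivAt (fun y => (starRingEnd ℂ) (g y)) ((starRingEnd ℂ) g') x := by
  have := (Complex.conjCLE.toContinuousLinearMap.hasFDerivAt
    (x := g x)).comp_hasDerivAt x h
  exact this

lemma derivRe {g : ℝ → ℂ} {g' : ℂ} {x : ℝ} (h : HasDerivAt g g' x) :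
    HasDerivAt (fun y => (g y).re) g'.re x := by
  have := (Complex.reCLM.hasFDerivAt (x := g x)).comp_hasDerivAt x h
  exact this

lemma derivIm {g : ℝ → ℂ} {g' : ℂ} {x : ℝ} (h : HasDerivAt g g' x) :
    HasDerivAt (fun y => (g y).im) g'.im x := by
  have := (Complex.imCLM.hasFDerivAt (x := g x)).comp_hasDerivAt x h
  exact this

lemma hasDerivAt_normSq {g : ℝ → ℂ} {g' : ℂ} {x : ℝ} (h : HasDerivAt g g' x) :
    HasDerivAt (fun y => (‖g y‖ ^ 2 : ℝ)) (2 * (g' * (starRingEnd ℂ) (g x)).re) x := by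
  have heq : (fun y => (‖g y‖ ^ 2 : ℝ)) = fun y => (g y * (starRingEnd ℂ) (g y)).re := by
    funext y
    rw [Complex.mul_conj]
    simp [Complex.normSq_eq_norm_sq]
    rw [← Complex.ofReal_pow, Complex.ofReal_re]
  rw [heq]
  have h2 := derivRe (h.mul (derivConj h))
  simp only [Pi.mul_apply] at h2
  convert h2 using 1
  simp only [Complex.add_re, Complex.mul_re, Complex.conj_re, Complex.conj_im]
  ring

/-- constancy from vanishing derivative on an open interval -/
lemma const_of_hasDerivAt_zero {a b : ℝ} {Q : ℝ → ℝ}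
    (h : ∀ t ∈ Ioo a b, HasDerivAt Q 0 t) {t₁ t₂ : ℝ}
    (h1 : t₁ ∈ Ioo a b) (h2 : t₂ ∈ Ioo a b) : Q t₁ = Q t₂ := by
  refine (convex_Ioo a b).is_const_of_fderivWithin_eq_zero
    (fun t ht => ((h t ht).differentiableAt).differentiableWithinAt) (fun t ht => ?_) h1 h2
  rw [fderivWithin_of_isOpen isOpen_Ioo ht]
  have h3 := (h t ht).hasFDerivAt.fderiv
  rw [h3]
  ext y
  simp

end KGZ

open MeasureTheory Filter Set

namespace KGZ

noncomputable def RR (α β : ℝ) (u : ℝ → ℝ → ℂ) (v : ℝ → ℝ → ℝ) (x t : ℝ) : ℂ :=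
  -(deriv (fun y => deriv (fun z => u z t) y) x) + u x t
    + (α : ℂ) * ((v x t : ℝ) : ℂ) * u x t
    + (β : ℂ) * ((‖u x t‖ ^ 2 : ℝ) : ℂ) * u x t

noncomputable def E2 (α β : ℝ) (u ρ : ℝ → ℝ → ℂ) (v : ℝ → ℝ → ℝ) (x t : ℝ) : ℝ :=
  2 * ((starRingEnd ℂ) (-(ρ x t)) * ρ x t + (starRingEnd ℂ) (u x t) * RR α β u v x t).im

noncomputable def G2 (u : ℝ → ℝ → ℂ) (x t : ℝ) : ℝ :=
  -2 * ((starRingEnd ℂ) (u x t) * deriv (fun z => u z t) x).im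

section main

variable {α β a b : ℝ} {u ρ : ℝ → ℝ → ℂ} {v n : ℝ → ℝ → ℝ}
variable (hu : ContDiffOn ℝ (⊤ : ℕ∞) (fun p : ℝ × ℝ => u p.1 p.2) (Set.univ ×ˢ Set.Ioo a b))
variable (hρ : ContDiffOn ℝ (⊤ : ℕ∞) (fun p : ℝ × ℝ => ρ p.1 p.2) (Set.univ ×ˢ Set.Ioo a b))
variable (hv : ContDiffOn ℝ (⊤ : ℕ∞) (fun p : ℝ × ℝ => v p.1 p.2) (Set.univ ×ˢ Set.Ioo a b))
variable (hn : ContDiffOn ℝ (⊤ : ℕ∞) (fun p : ℝ × ℝ => n p.1 p.2) (Set.univ ×ˢ Set.Ioo a b))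
variable (hus : UnifSchwartz u a b) (hρs : UnifSchwartz ρ a b)
variable (hvs : UnifSchwartz v a b) (hns : UnifSchwartz n a b)
variable (heq1 : ∀ x : ℝ, ∀ t ∈ Set.Ioo a b, deriv (fun s => u x s) t = -ρ x t)
variable (heq2 : ∀ x : ℝ, ∀ t ∈ Set.Ioo a b,
      deriv (fun s => ρ x s) t =
        -(deriv (fun y => deriv (fun z => u z t) y) x) + u x t
          + (α : ℂ) * ((v x t : ℝ) : ℂ) * u x t
          + (β : ℂ) * ((‖u x t‖^2 : ℝ) : ℂ) * u x t)
variable (heq3 : ∀ x : ℝ, ∀ t ∈ Set.Ioo a b,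
      deriv (fun s => v x s) t = deriv (fun y => n y t) x)
variable (heq4 : ∀ x : ℝ, ∀ t ∈ Set.Ioo a b,
      deriv (fun s => n x s) t - deriv (fun y => v y t) x
        = deriv (fun y => ‖u y t‖^2) x)

include hρ heq2 in
lemma ht_rho {x t : ℝ} (ht : t ∈ Set.Ioo a b) :
    HasDerivAt (fun s => ρ x s) (RR α β u v x t) t := by
  have h := hasDerivAt_t hρ (x := x) ht
  rw [heq2 x t ht] at h
  simpa only [RR] using h

include hu heq1 in
lemma ht_u {x t : ℝ} (ht : t ∈ Set.Ioo a b) :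
    HasDerivAt (fun s => u x s) (-ρ x t) t := by
  have h := hasDerivAt_t hu (x := x) ht
  rwa [heq1 x t ht] at h

include hu hρ heq1 in
lemma ht_u1 {x t : ℝ} (ht : t ∈ Set.Ioo a b) :
    HasDerivAt (fun s => deriv (fun y => u y s) x) (-(deriv (fun y => ρ y t) x)) t := by
  have h := swap hu (x := x) ht
  have h2 : (fun y => deriv (fun s => u y s) t) = fun y => -ρ y t := by
    funext y; exact heq1 y t ht
  rw [h2] at h
  have h3 : deriv (fun y => -ρ y t) x = -(deriv (fun y => ρ y t) x) :=
    ((hasDerivAt_x hρ (x := x) ht).neg).deriv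
  rwa [h3] at h

include hv heq3 in
lemma ht_v {x t : ℝ} (ht : t ∈ Set.Ioo a b) :
    HasDerivAt (fun s => v x s) (deriv (fun y => n y t) x) t := by
  have h := hasDerivAt_t hv (x := x) ht
  rwa [heq3 x t ht] at h

include hn hu heq4 in
lemma ht_n {x t : ℝ} (ht : t ∈ Set.Ioo a b) :
    HasDerivAt (fun s => n x s)
      (deriv (fun y => v y t) x
        + 2 * ((deriv (fun y => u y t) x) * (starRingEnd ℂ) (u x t)).re) t := by
  have h := hasDerivAt_t hn (x := x) ht
  have h4 := heq4 x t ht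
  have h5 : deriv (fun y => ‖u y t‖ ^ 2) x
      = 2 * ((deriv (fun y => u y t) x) * (starRingEnd ℂ) (u x t)).re :=
    (hasDerivAt_normSq (hasDerivAt_x hu (x := x) ht)).deriv
  have h6 : deriv (fun s => n x s) t
      = deriv (fun y => v y t) x
        + 2 * ((deriv (fun y => u y t) x) * (starRingEnd ℂ) (u x t)).re := by
    rw [← h5]; linarith
  rwa [h6] at h

include hu hρ heq1 heq2 in
lemma ht_f2 {x t : ℝ} (ht : t ∈ Set.Ioo a b) :
    HasDerivAt (fun s => 2 * ((starRingEnd ℂ) (u x s) * ρ x s).im)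
      (E2 α β u ρ v x t) t := by
  have h1 : HasDerivAt (fun s => u x s) (-ρ x t) t := ht_u hu heq1 (x := x) ht
  have h2 : HasDerivAt (fun s => ρ x s) (RR α β u v x t) t := ht_rho hρ heq2 (x := x) ht
  have h := (derivIm ((derivConj h1).mul h2)).const_mul (2 : ℝ)
  simpa only [E2, Pi.mul_apply] using h

include hu in
lemma hx_G2 {x t : ℝ} (ht : t ∈ Set.Ioo a b) :
    HasDerivAt (fun y => G2 u y t) (E2 α β u ρ v x t) x := by
  have h0 := hasDerivAt_x hu (x := x) ht
  have h1 := hasDerivAt_x1 hu (x := x) ht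
  have h := (derivIm ((derivConj h0).mul h1)).const_mul (-2 : ℝ)
  simp only [G2]
  simp only [Pi.mul_apply] at h
  refine h.congr_deriv ?_
  simp only [E2, RR, Complex.add_im, Complex.mul_im, Complex.neg_im, Complex.neg_re,
    Complex.conj_re, Complex.conj_im, Complex.ofReal_re, Complex.ofReal_im,
    Complex.mul_re, Complex.add_re]
  ring

include hus hρs hvs in
lemma dec_E2 {K : Set ℝ} (hK : IsCompact K) (hKs : K ⊆ Set.Ioo a b) :
    EDecOn K (fun x t => E2 α β u ρ v x t) := by
  have du0 := decOn0 hus hK hKs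
  have du2 := decOn2 hus hK hKs
  have dρ0 := decOn0 hρs hK hKs
  have dv0 := decOn0 hvs hK hKs
  simp only [E2, RR]
  exact (((dρ0.neg.conj.mul dρ0).add (du0.conj.mul ((((du2.neg).add du0).add
    ((dv0.ofReal.smul_complex (α : ℂ)).mul du0)).add
    (((du0.normSq.ofReal).smul_complex (β : ℂ)).mul du0)))).im).const_mul 2

include hus hρs in
lemma dec_igd2 {K : Set ℝ} (hK : IsCompact K) (hKs : K ⊆ Set.Ioo a b) :
    EDecOn K (fun x t => (starRingEnd ℂ) (u x t) * ρ x t) :=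
  ((decOn0 hus hK hKs).conj).mul (decOn0 hρs hK hKs)

include hus hρs in
lemma dec_f2 {K : Set ℝ} (hK : IsCompact K) (hKs : K ⊆ Set.Ioo a b) :
    EDecOn K (fun x t => 2 * ((starRingEnd ℂ) (u x t) * ρ x t).im) :=
  ((dec_igd2 hus hρs hK hKs).im).const_mul 2

include hus in
lemma dec_G2 {K : Set ℝ} (hK : IsCompact K) (hKs : K ⊆ Set.Ioo a b) :
    EDecOn K (fun x t => G2 u x t) := by
  have du0 := decOn0 hus hK hKs
  have du1 := decOn1 hus hK hKs
  simp only [G2]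
  exact ((du0.conj.mul du1).im).const_mul (-2)

include hu hρ hv in
lemma cont_E2 {t : ℝ} (ht : t ∈ Set.Ioo a b) :
    Continuous (fun x => E2 α β u ρ v x t) := by
  have c1 : Continuous (fun x => u x t) := cont_slice0 hu ht
  have c2 : Continuous (fun x => deriv (fun y => deriv (fun z => u z t) y) x) :=
    cont_slice2 hu ht
  have c3 : Continuous (fun x => ρ x t) := cont_slice0 hρ ht
  have c4 : Continuous (fun x => v x t) := cont_slice0 hv ht
  have hRR : Continuous (fun x => RR α β u v x t) := by
    simp only [RR]
    exact ((c2.neg.add c1).add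
      ((continuous_const.mul (Complex.continuous_ofReal.comp c4)).mul c1)).add
      ((continuous_const.mul (Complex.continuous_ofReal.comp ((c1.norm).pow 2))).mul c1)
  simp only [E2]
  exact continuous_const.mul (Complex.continuous_im.comp
    (((Complex.continuous_conj.comp c3.neg).mul c3).add
      ((Complex.continuous_conj.comp c1).mul hRR)))

include hu hρ in
lemma cont_igd2 {t : ℝ} (ht : t ∈ Set.Ioo a b) :
    Continuous (fun x => (starRingEnd ℂ) (u x t) * ρ x t) :=
  (Complex.continuous_conj.comp (cont_slice0 hu ht)).mul (cont_slice0 hρ ht)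

include hu hρ in
lemma cont_f2 {t : ℝ} (ht : t ∈ Set.Ioo a b) :
    Continuous (fun x => 2 * ((starRingEnd ℂ) (u x t) * ρ x t).im) :=
  continuous_const.mul (Complex.continuous_im.comp (cont_igd2 hu hρ ht))

include hu hρ hv hus hρs hvs in
lemma int_E2_zero {t : ℝ} (ht : t ∈ Set.Ioo a b) :
    ∫ x : ℝ, E2 α β u ρ v x t = 0 := by
  have hsub : ({t} : Set ℝ) ⊆ Set.Ioo a b := singleton_subset_iff.2 ht
  have dE := dec_E2 (α := α) (β := β) hus hρs hvs isCompact_singleton hsub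
  have dG := dec_G2 hus isCompact_singleton hsub
  have hmem : t ∈ ({t} : Set ℝ) := mem_singleton t
  have h := integral_of_hasDerivAt_of_tendsto
    (f := fun x => G2 u x t) (f' := fun x => E2 α β u ρ v x t)
    (fun x => hx_G2 hu (x := x) ht) (dE.integrable hmem (cont_E2 hu hρ hv ht))
    (dG.tendsto_atBot hmem) (dG.tendsto_atTop hmem)
  simpa using h

include hu hρ hv hus hρs hvs heq1 heq2 in
lemma Q2_hasDeriv {t₀ : ℝ} (ht₀ : t₀ ∈ Set.Ioo a b) :
    HasDerivAt (fun t => ∫ x : ℝ, 2 * ((starRingEnd ℂ) (u x t) * ρ x t).im) 0 t₀ := by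
  obtain ⟨ε, hε, hball⟩ : ∃ ε > 0, Metric.closedBall t₀ ε ⊆ Set.Ioo a b := by
    obtain ⟨ε, hε, h⟩ := (Metric.nhds_basis_closedBall.mem_iff).1 (isOpen_Ioo.mem_nhds ht₀)
    exact ⟨ε, hε, h⟩
  have hK : IsCompact (Metric.closedBall t₀ ε) := isCompact_closedBall t₀ ε
  obtain ⟨CE, dE⟩ := dec_E2 hus hρs hvs hK hball
  have df := dec_f2 hus hρs hK hball
  have ht₀K : t₀ ∈ Metric.closedBall t₀ ε := Metric.mem_closedBall_self hε.le
  have h := hasDerivAt_integral_of_dominated_loc_of_deriv_le (μ := volume)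
    (F := fun t x => 2 * ((starRingEnd ℂ) (u x t) * ρ x t).im)
    (F' := fun t x => E2 α β u ρ v x t)
    (bound := fun x => CE * (1 + x ^ 2)⁻¹) (Metric.ball_mem_nhds t₀ hε)
    (by
      filter_upwards [isOpen_Ioo.mem_nhds ht₀] with s hs
      exact (cont_f2 hu hρ hs).aestronglyMeasurable)
    (df.integrable ht₀K (cont_f2 hu hρ ht₀))
    ((cont_E2 hu hρ hv ht₀).aestronglyMeasurable)
    (Eventually.of_forall fun x s hs =>
      dE.norm_le s (Metric.ball_subset_closedBall hs) x)
    ((integrable_inv_one_add_sq).const_mul CE)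
    (Eventually.of_forall fun x s hs =>
      ht_f2 hu hρ heq1 heq2 (x := x) (hball (Metric.ball_subset_closedBall hs)))
  have h2 := h.2
  rwa [int_E2_zero hu hρ hv hus hρs hvs ht₀] at h2

include hu hρ hv hus hρs hvs heq1 heq2 in
lemma Q2_const {t₁ t₂ : ℝ} (ht₁ : t₁ ∈ Set.Ioo a b) (ht₂ : t₂ ∈ Set.Ioo a b) :
    2 * (∫ x : ℝ, (starRingEnd ℂ) (u x t₁) * ρ x t₁).im
      = 2 * (∫ x : ℝ, (starRingEnd ℂ) (u x t₂) * ρ x t₂).im := by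
  have key : ∀ t ∈ Set.Ioo a b,
      2 * (∫ x : ℝ, (starRingEnd ℂ) (u x t) * ρ x t).im
        = ∫ x : ℝ, 2 * ((starRingEnd ℂ) (u x t) * ρ x t).im := by
    intro t ht
    have hsub : ({t} : Set ℝ) ⊆ Set.Ioo a b := singleton_subset_iff.2 ht
    have d := dec_igd2 hus hρs isCompact_singleton hsub
    have hint : Integrable (fun x => (starRingEnd ℂ) (u x t) * ρ x t) :=
      d.integrable (mem_singleton t) (cont_igd2 hu hρ ht)
    rw [integral_const_mul]
    congr 1
    have := integral_im (μ := volume) (f := fun x => (starRingEnd ℂ) (u x t) * ρ x t) hint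
    simpa [RCLike.im_to_complex] using this.symm
  rw [key t₁ ht₁, key t₂ ht₂]
  exact const_of_hasDerivAt_zero
    (fun t ht => Q2_hasDeriv hu hρ hv hus hρs hvs heq1 heq2 ht) ht₁ ht₂

end main
end KGZ


namespace KGZ

noncomputable def E1 (α β : ℝ) (u ρ : ℝ → ℝ → ℂ) (v n : ℝ → ℝ → ℝ) (x t : ℝ) : ℝ :=
  2 * ((-(deriv (fun y => ρ y t) x)) * (starRingEnd ℂ) (ρ x t)
        + (deriv (fun y => u y t) x) * (starRingEnd ℂ) (RR α β u v x t)).re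
    - α * ((deriv (fun y => v y t) x
        + 2 * ((deriv (fun y => u y t) x) * (starRingEnd ℂ) (u x t)).re) * v x t
      + n x t * deriv (fun y => n y t) x)

noncomputable def G1 (α β : ℝ) (u ρ : ℝ → ℝ → ℂ) (v n : ℝ → ℝ → ℝ) (x t : ℝ) : ℝ :=
  -(‖ρ x t‖ ^ 2) - ‖deriv (fun y => u y t) x‖ ^ 2 + ‖u x t‖ ^ 2
    + β / 2 * (‖u x t‖ ^ 2 * ‖u x t‖ ^ 2)
    - α / 2 * (v x t * v x t + n x t * n x t)

section main

variable {α β a b : ℝ} {u ρ : ℝ → ℝ → ℂ} {v n : ℝ → ℝ → ℝ}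
variable (hu : ContDiffOn ℝ (⊤ : ℕ∞) (fun p : ℝ × ℝ => u p.1 p.2) (Set.univ ×ˢ Set.Ioo a b))
variable (hρ : ContDiffOn ℝ (⊤ : ℕ∞) (fun p : ℝ × ℝ => ρ p.1 p.2) (Set.univ ×ˢ Set.Ioo a b))
variable (hv : ContDiffOn ℝ (⊤ : ℕ∞) (fun p : ℝ × ℝ => v p.1 p.2) (Set.univ ×ˢ Set.Ioo a b))
variable (hn : ContDiffOn ℝ (⊤ : ℕ∞) (fun p : ℝ × ℝ => n p.1 p.2) (Set.univ ×ˢ Set.Ioo a b))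
variable (hus : UnifSchwartz u a b) (hρs : UnifSchwartz ρ a b)
variable (hvs : UnifSchwartz v a b) (hns : UnifSchwartz n a b)
variable (heq1 : ∀ x : ℝ, ∀ t ∈ Set.Ioo a b, deriv (fun s => u x s) t = -ρ x t)
variable (heq2 : ∀ x : ℝ, ∀ t ∈ Set.Ioo a b,
      deriv (fun s => ρ x s) t =
        -(deriv (fun y => deriv (fun z => u z t) y) x) + u x t
          + (α : ℂ) * ((v x t : ℝ) : ℂ) * u x t
          + (β : ℂ) * ((‖u x t‖^2 : ℝ) : ℂ) * u x t)
variable (heq3 : ∀ x : ℝ, ∀ t ∈ Set.Ioo a b,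
      deriv (fun s => v x s) t = deriv (fun y => n y t) x)
variable (heq4 : ∀ x : ℝ, ∀ t ∈ Set.Ioo a b,
      deriv (fun s => n x s) t - deriv (fun y => v y t) x
        = deriv (fun y => ‖u y t‖^2) x)

include hu hρ hv hn heq1 heq2 heq3 heq4 in
lemma ht_f1 {x t : ℝ} (ht : t ∈ Set.Ioo a b) :
    HasDerivAt
      (fun s => 2 * ((deriv (fun y => u y s) x) * (starRingEnd ℂ) (ρ x s)).re
        - α * (n x s * v x s))
      (E1 α β u ρ v n x t) t := by
  have h1 : HasDerivAt (fun s => deriv (fun y => u y s) x) (-(deriv (fun y => ρ y t) x)) t :=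
    ht_u1 hu hρ heq1 (x := x) ht
  have h2 : HasDerivAt (fun s => ρ x s) (RR α β u v x t) t := ht_rho hρ heq2 (x := x) ht
  have h3 := ht_n hu hn heq4 (x := x) ht
  have h4 := ht_v hv heq3 (x := x) ht
  have hA := (derivRe (h1.mul (derivConj h2))).const_mul (2 : ℝ)
  have hB := (h3.mul h4).const_mul α
  have h := hA.sub hB
  simpa only [E1, Pi.mul_def, Pi.sub_def] using h

include hu hρ hv hn heq3 in
lemma hx_G1 {x t : ℝ} (ht : t ∈ Set.Ioo a b) :
    HasDerivAt (fun y => G1 α β u ρ v n y t) (E1 α β u ρ v n x t) x := by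
  have hu0 := hasDerivAt_x hu (x := x) ht
  have hu1 := hasDerivAt_x1 hu (x := x) ht
  have hρ0 := hasDerivAt_x hρ (x := x) ht
  have hv0 := hasDerivAt_x hv (x := x) ht
  have hn0 := hasDerivAt_x hn (x := x) ht
  have hA := hasDerivAt_normSq hρ0
  have hB := hasDerivAt_normSq hu1
  have hC := hasDerivAt_normSq hu0
  have hD := (hC.mul hC).const_mul (β / 2)
  have hE := ((hv0.mul hv0).add (hn0.mul hn0)).const_mul (α / 2)
  have h := (((hA.neg.sub hB).add hC).add hD).sub hE
  simp only [G1]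
  simp only [Pi.mul_def, Pi.sub_def, Pi.add_def, Pi.neg_def] at h
  refine h.congr_deriv ?_
  simp only [E1, RR, Complex.add_im, Complex.mul_im, Complex.neg_im, Complex.neg_re,
    Complex.conj_re, Complex.conj_im, Complex.ofReal_re, Complex.ofReal_im,
    Complex.mul_re, Complex.add_re]
  ring

include hus hvs in
lemma dec_RR {K : Set ℝ} (hK : IsCompact K) (hKs : K ⊆ Set.Ioo a b) :
    EDecOn K (fun x t => RR α β u v x t) := by
  have du0 := decOn0 hus hK hKs
  have du2 := decOn2 hus hK hKs
  have dv0 := decOn0 hvs hK hKs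
  simp only [RR]
  exact (((du2.neg).add du0).add ((dv0.ofReal.smul_complex (α : ℂ)).mul du0)).add
    (((du0.normSq.ofReal).smul_complex (β : ℂ)).mul du0)

include hus hρs hvs hns in
lemma dec_E1 {K : Set ℝ} (hK : IsCompact K) (hKs : K ⊆ Set.Ioo a b) :
    EDecOn K (fun x t => E1 α β u ρ v n x t) := by
  have du0 := decOn0 hus hK hKs
  have du1 := decOn1 hus hK hKs
  have dρ0 := decOn0 hρs hK hKs
  have dρ1 := decOn1 hρs hK hKs
  have dv0 := decOn0 hvs hK hKs
  have dv1 := decOn1 hvs hK hKs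
  have dn0 := decOn0 hns hK hKs
  have dn1 := decOn1 hns hK hKs
  have dRR := dec_RR (α := α) (β := β) hus hvs hK hKs
  simp only [E1]
  exact ((((dρ1.neg.mul dρ0.conj).add (du1.mul dRR.conj)).re).const_mul 2).sub
    ((((dv1.add (((du1.mul du0.conj).re).const_mul 2)).mul dv0).add
      (dn0.mul dn1)).const_mul α)

include hus hρs in
lemma dec_igd1 {K : Set ℝ} (hK : IsCompact K) (hKs : K ⊆ Set.Ioo a b) :
    EDecOn K (fun x t => (deriv (fun y => u y t) x) * (starRingEnd ℂ) (ρ x t)) :=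
  (decOn1 hus hK hKs).mul ((decOn0 hρs hK hKs).conj)

include hvs hns in
lemma dec_nv {K : Set ℝ} (hK : IsCompact K) (hKs : K ⊆ Set.Ioo a b) :
    EDecOn K (fun x t => n x t * v x t) :=
  (decOn0 hns hK hKs).mul (decOn0 hvs hK hKs)

include hus hρs hvs hns in
lemma dec_f1 {K : Set ℝ} (hK : IsCompact K) (hKs : K ⊆ Set.Ioo a b) :
    EDecOn K (fun x t =>
      2 * ((deriv (fun y => u y t) x) * (starRingEnd ℂ) (ρ x t)).re
        - α * (n x t * v x t)) :=
  (((dec_igd1 hus hρs hK hKs).re).const_mul 2).sub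
    ((dec_nv hvs hns hK hKs).const_mul α)

include hus hρs hvs hns in
lemma dec_G1 {K : Set ℝ} (hK : IsCompact K) (hKs : K ⊆ Set.Ioo a b) :
    EDecOn K (fun x t => G1 α β u ρ v n x t) := by
  have du0 := decOn0 hus hK hKs
  have du1 := decOn1 hus hK hKs
  have dρ0 := decOn0 hρs hK hKs
  have dv0 := decOn0 hvs hK hKs
  have dn0 := decOn0 hns hK hKs
  simp only [G1]
  exact ((((dρ0.normSq.neg.sub du1.normSq).add du0.normSq).add
    ((du0.normSq.mul du0.normSq).const_mul (β / 2))).sub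
    (((dv0.mul dv0).add (dn0.mul dn0)).const_mul (α / 2)))

include hu hρ hv hn in
lemma cont_E1 {t : ℝ} (ht : t ∈ Set.Ioo a b) :
    Continuous (fun x => E1 α β u ρ v n x t) := by
  have cu0 : Continuous (fun x => u x t) := cont_slice0 hu ht
  have cu1 : Continuous (fun x => deriv (fun y => u y t) x) := cont_slice1 hu ht
  have cu2 : Continuous (fun x => deriv (fun y => deriv (fun z => u z t) y) x) :=
    cont_slice2 hu ht
  have cρ0 : Continuous (fun x => ρ x t) := cont_slice0 hρ ht
  have cρ1 : Continuous (fun x => deriv (fun y => ρ y t) x) := cont_slice1 hρ ht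
  have cv0 : Continuous (fun x => v x t) := cont_slice0 hv ht
  have cv1 : Continuous (fun x => deriv (fun y => v y t) x) := cont_slice1 hv ht
  have cn0 : Continuous (fun x => n x t) := cont_slice0 hn ht
  have cn1 : Continuous (fun x => deriv (fun y => n y t) x) := cont_slice1 hn ht
  have hRR : Continuous (fun x => RR α β u v x t) := by
    simp only [RR]
    exact ((cu2.neg.add cu0).add
      ((continuous_const.mul (Complex.continuous_ofReal.comp cv0)).mul cu0)).add
      ((continuous_const.mul (Complex.continuous_ofReal.comp ((cu0.norm).pow 2))).mul cu0)
  simp only [E1]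
  refine Continuous.sub ?_ ?_
  · exact continuous_const.mul (Complex.continuous_re.comp
      ((cρ1.neg.mul (Complex.continuous_conj.comp cρ0)).add
        (cu1.mul (Complex.continuous_conj.comp hRR))))
  · exact continuous_const.mul
      (((cv1.add (continuous_const.mul (Complex.continuous_re.comp
        (cu1.mul (Complex.continuous_conj.comp cu0))))).mul cv0).add (cn0.mul cn1))

include hu hρ in
lemma cont_igd1 {t : ℝ} (ht : t ∈ Set.Ioo a b) :
    Continuous (fun x => (deriv (fun y => u y t) x) * (starRingEnd ℂ) (ρ x t)) :=
  (cont_slice1 hu ht).mul (Complex.continuous_conj.comp (cont_slice0 hρ ht))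

include hv hn in
lemma cont_nv {t : ℝ} (ht : t ∈ Set.Ioo a b) :
    Continuous (fun x => n x t * v x t) :=
  (cont_slice0 hn ht).mul (cont_slice0 hv ht)

include hu hρ hv hn in
lemma cont_f1 {t : ℝ} (ht : t ∈ Set.Ioo a b) :
    Continuous (fun x =>
      2 * ((deriv (fun y => u y t) x) * (starRingEnd ℂ) (ρ x t)).re
        - α * (n x t * v x t)) :=
  (continuous_const.mul (Complex.continuous_re.comp (cont_igd1 hu hρ ht))).sub
    (continuous_const.mul (cont_nv hv hn ht))

include hu hρ hv hn hus hρs hvs hns heq3 in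
lemma int_E1_zero {t : ℝ} (ht : t ∈ Set.Ioo a b) :
    ∫ x : ℝ, E1 α β u ρ v n x t = 0 := by
  have hsub : ({t} : Set ℝ) ⊆ Set.Ioo a b := singleton_subset_iff.2 ht
  have dE := dec_E1 (α := α) (β := β) hus hρs hvs hns isCompact_singleton hsub
  have dG := dec_G1 (α := α) (β := β) hus hρs hvs hns isCompact_singleton hsub
  have hmem : t ∈ ({t} : Set ℝ) := mem_singleton t
  have h := integral_of_hasDerivAt_of_tendsto
    (f := fun x => G1 α β u ρ v n x t) (f' := fun x => E1 α β u ρ v n x t)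
    (fun x => hx_G1 hu hρ hv hn heq3 (x := x) ht)
    (dE.integrable hmem (cont_E1 hu hρ hv hn ht))
    (dG.tendsto_atBot hmem) (dG.tendsto_atTop hmem)
  simpa using h

include hu hρ hv hn hus hρs hvs hns heq1 heq2 heq3 heq4 in
lemma Q1_hasDeriv {t₀ : ℝ} (ht₀ : t₀ ∈ Set.Ioo a b) :
    HasDerivAt (fun t => ∫ x : ℝ,
      (2 * ((deriv (fun y => u y t) x) * (starRingEnd ℂ) (ρ x t)).re
        - α * (n x t * v x t))) 0 t₀ := by
  obtain ⟨ε, hε, hball⟩ : ∃ ε > 0, Metric.closedBall t₀ ε ⊆ Set.Ioo a b := by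
    obtain ⟨ε, hε, h⟩ := (Metric.nhds_basis_closedBall.mem_iff).1 (isOpen_Ioo.mem_nhds ht₀)
    exact ⟨ε, hε, h⟩
  have hK : IsCompact (Metric.closedBall t₀ ε) := isCompact_closedBall t₀ ε
  obtain ⟨CE, dE⟩ := dec_E1 (α := α) (β := β) hus hρs hvs hns hK hball
  have df := dec_f1 (α := α) hus hρs hvs hns hK hball
  have ht₀K : t₀ ∈ Metric.closedBall t₀ ε := Metric.mem_closedBall_self hε.le
  have h := hasDerivAt_integral_of_dominated_loc_of_deriv_le (μ := volume)
    (F := fun t x => 2 * ((deriv (fun y => u y t) x) * (starRingEnd ℂ) (ρ x t)).re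
        - α * (n x t * v x t))
    (F' := fun t x => E1 α β u ρ v n x t)
    (bound := fun x => CE * (1 + x ^ 2)⁻¹) (Metric.ball_mem_nhds t₀ hε)
    (by
      filter_upwards [isOpen_Ioo.mem_nhds ht₀] with s hs
      exact (cont_f1 hu hρ hv hn hs).aestronglyMeasurable)
    (df.integrable ht₀K (cont_f1 hu hρ hv hn ht₀))
    ((cont_E1 hu hρ hv hn ht₀).aestronglyMeasurable)
    (Eventually.of_forall fun x s hs =>
      dE.norm_le s (Metric.ball_subset_closedBall hs) x)
    ((integrable_inv_one_add_sq).const_mul CE)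
    (Eventually.of_forall fun x s hs =>
      ht_f1 hu hρ hv hn heq1 heq2 heq3 heq4 (x := x)
        (hball (Metric.ball_subset_closedBall hs)))
  have h2 := h.2
  rwa [int_E1_zero hu hρ hv hn hus hρs hvs hns heq3 ht₀] at h2

include hu hρ hv hn hus hρs hvs hns heq1 heq2 heq3 heq4 in
lemma Q1_const {t₁ t₂ : ℝ} (ht₁ : t₁ ∈ Set.Ioo a b) (ht₂ : t₂ ∈ Set.Ioo a b) :
    2 * (∫ x : ℝ, deriv (fun y => u y t₁) x * (starRingEnd ℂ) (ρ x t₁)).re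
        - α * ∫ x : ℝ, n x t₁ * v x t₁
      = 2 * (∫ x : ℝ, deriv (fun y => u y t₂) x * (starRingEnd ℂ) (ρ x t₂)).re
        - α * ∫ x : ℝ, n x t₂ * v x t₂ := by
  have key : ∀ t ∈ Set.Ioo a b,
      2 * (∫ x : ℝ, deriv (fun y => u y t) x * (starRingEnd ℂ) (ρ x t)).re
          - α * ∫ x : ℝ, n x t * v x t
        = ∫ x : ℝ, (2 * ((deriv (fun y => u y t) x) * (starRingEnd ℂ) (ρ x t)).re
            - α * (n x t * v x t)) := by
    intro t ht
    have hsub : ({t} : Set ℝ) ⊆ Set.Ioo a b := singleton_subset_iff.2 ht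
    have hint1 : Integrable (fun x => deriv (fun y => u y t) x * (starRingEnd ℂ) (ρ x t)) :=
      (dec_igd1 hus hρs isCompact_singleton hsub).integrable (mem_singleton t)
        (cont_igd1 hu hρ ht)
    have hint2 : Integrable (fun x => n x t * v x t) :=
      (dec_nv hvs hns isCompact_singleton hsub).integrable (mem_singleton t)
        (cont_nv hv hn ht)
    have hi1 : Integrable (fun x =>
        2 * ((deriv (fun y => u y t) x * (starRingEnd ℂ) (ρ x t)).re)) :=
      (((dec_igd1 hus hρs isCompact_singleton hsub).re).const_mul 2).integrable
        (mem_singleton t)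
        (continuous_const.mul (Complex.continuous_re.comp (cont_igd1 hu hρ ht)))
    have hi2 : Integrable (fun x => α * (n x t * v x t)) := hint2.const_mul α
    rw [integral_sub hi1 hi2, integral_const_mul, integral_const_mul]
    congr 1
    congr 1
    have := integral_re (μ := volume)
      (f := fun x => deriv (fun y => u y t) x * (starRingEnd ℂ) (ρ x t)) hint1
    simpa [RCLike.re_to_complex] using this.symm
  rw [key t₁ ht₁, key t₂ ht₂]
  exact const_of_hasDerivAt_zero
    (fun t ht => Q1_hasDeriv hu hρ hv hn hus hρs hvs hns heq1 heq2 heq3 heq4 ht) ht₁ ht₂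

end main
end KGZ

open MeasureTheory Filter in
theorem stmt18 (α β a b : ℝ) (hβ : β ≠ 0) (hab : a < b)
    (u ρ : ℝ → ℝ → ℂ) (v n : ℝ → ℝ → ℝ)
    (hu : ContDiffOn ℝ (⊤ : ℕ∞) (fun p : ℝ × ℝ => u p.1 p.2) (Set.univ ×ˢ Set.Ioo a b))
    (hρ : ContDiffOn ℝ (⊤ : ℕ∞) (fun p : ℝ × ℝ => ρ p.1 p.2) (Set.univ ×ˢ Set.Ioo a b))
    (hv : ContDiffOn ℝ (⊤ : ℕ∞) (fun p : ℝ × ℝ => v p.1 p.2) (Set.univ ×ˢ Set.Ioo a b))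
    (hn : ContDiffOn ℝ (⊤ : ℕ∞) (fun p : ℝ × ℝ => n p.1 p.2) (Set.univ ×ˢ Set.Ioo a b))
    (hus : UnifSchwartz u a b) (hρs : UnifSchwartz ρ a b)
    (hvs : UnifSchwartz v a b) (hns : UnifSchwartz n a b)
    (heq1 : ∀ x : ℝ, ∀ t ∈ Set.Ioo a b, deriv (fun s => u x s) t = -ρ x t)
    (heq2 : ∀ x : ℝ, ∀ t ∈ Set.Ioo a b,
      deriv (fun s => ρ x s) t =
        -(deriv (fun y => deriv (fun z => u z t) y) x) + u x t
          + (α : ℂ) * ((v x t : ℝ) : ℂ) * u x t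
          + (β : ℂ) * ((‖u x t‖^2 : ℝ) : ℂ) * u x t)
    (heq3 : ∀ x : ℝ, ∀ t ∈ Set.Ioo a b,
      deriv (fun s => v x s) t = deriv (fun y => n y t) x)
    (heq4 : ∀ x : ℝ, ∀ t ∈ Set.Ioo a b,
      deriv (fun s => n x s) t - deriv (fun y => v y t) x
        = deriv (fun y => ‖u y t‖^2) x) :
    ∀ t₁ ∈ Set.Ioo a b, ∀ t₂ ∈ Set.Ioo a b,
      (2 * (∫ x : ℝ, deriv (fun y => u y t₁) x * (starRingEnd ℂ) (ρ x t₁)).re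
          - α * ∫ x : ℝ, n x t₁ * v x t₁)
        = (2 * (∫ x : ℝ, deriv (fun y => u y t₂) x * (starRingEnd ℂ) (ρ x t₂)).re
          - α * ∫ x : ℝ, n x t₂ * v x t₂) ∧
      (2 * (∫ x : ℝ, (starRingEnd ℂ) (u x t₁) * ρ x t₁).im)
        = (2 * (∫ x : ℝ, (starRingEnd ℂ) (u x t₂) * ρ x t₂).im) := by
  intro t₁ ht₁ t₂ ht₂
  exact ⟨KGZ.Q1_const hu hρ hv hn hus hρs hvs hns heq1 heq2 heq3 heq4 ht₁ ht₂,
    KGZ.Q2_const hu hρ hv hus hρs hvs heq1 heq2 ht₁ ht₂⟩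
end
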